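/- arXiv:2307.14292 — 7 statements merged into one kernel-verified Lean document; each statement's English description precedes it below -/
import Mathlib

section
/- For every k ≥ 1 there exists a constant C = C(k) such that every finite simple graph on n ≥ 2 vertices of NLC-width at most k admits an NLC-decomposition tree of width k·2^{k+1} whose depth is at most C·log₂ n. -/
def joinGraph {k : ℕ} {α β : Type*} (G₁ : SimpleGraph α) (G₂ : SimpleGraph β)
    (c₁ : α → Fin k) (c₂ : β → Fin k) (S : Set (Fin k × Fin k)) : SimpleGraph (α ⊕ β) where
  Adj x y :=
    match x, y with
    | Sum.inl a, Sum.inl b => G₁.Adj a b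
    | Sum.inr a, Sum.inr b => G₂.Adj a b
    | Sum.inl a, Sum.inr b => (c₁ a, c₂ b) ∈ S
    | Sum.inr b, Sum.inl a => (c₁ a, c₂ b) ∈ S
  symm := ⟨by
    rintro (a | a) (b | b) h
    · exact G₁.adj_symm h
    · exact h
    · exact h
    · exact G₂.adj_symm h⟩
  loopless := ⟨by
    rintro (a | a) h
    · exact G₁.irrefl h
    · exact G₂.irrefl h⟩


/-- NLC expressions with colors in `Fin k`. -/
inductive NLCExpr (k : ℕ) : Type
  | single (c : Fin k) : NLCExpr k
  | join (S : Set (Fin k × Fin k)) (t₁ t₂ : NLCExpr k) : NLCExpr k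
  | recolor (R : Fin k → Fin k) (t : NLCExpr k) : NLCExpr k

namespace NLCExpr

variable {k : ℕ}

/-- The vertex set of the colored graph built by an NLC expression. -/
def V : NLCExpr k → Type
  | single _ => Unit
  | join _ t₁ t₂ => t₁.V ⊕ t₂.V
  | recolor _ t => t.V

/-- The coloring of the colored graph built by an NLC expression. -/
def coloring : (t : NLCExpr k) → t.V → Fin k
  | single c => fun _ => c
  | join _ t₁ t₂ => Sum.elim t₁.coloring t₂.coloring
  | recolor R t => fun v => R (t.coloring v)

/-- The graph built by an NLC expression. -/
def graph : (t : NLCExpr k) → SimpleGraph t.V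
  | single _ => ⊥
  | join S t₁ t₂ => joinGraph t₁.graph t₂.graph t₁.coloring t₂.coloring S
  | recolor _ t => t.graph

end NLCExpr


/-- `G` has NLC-width at most `k`: it is the underlying graph of a member of `NLC_k`. -/
def HasNLCWidthLE {V : Type*} (G : SimpleGraph V) (k : ℕ) : Prop :=
  ∃ t : NLCExpr k, Nonempty (G ≃g t.graph)

/-- NLC-decomposition trees of width `k`: leaves create colored vertices, internal nodes
have two ordered children, carry a set `S` of pairs of colors and an optional recoloring. -/
inductive NLCTree (k : ℕ) : Type
  | leaf (c : Fin k) : NLCTree k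
  | node (S : Set (Fin k × Fin k)) (R : Option (Fin k → Fin k)) (l r : NLCTree k) : NLCTree k

namespace NLCTree

variable {k : ℕ}

def V : NLCTree k → Type
  | leaf _ => Unit
  | node _ _ l r => l.V ⊕ r.V

def coloring : (t : NLCTree k) → t.V → Fin k
  | leaf c => fun _ => c
  | node _ R l r => fun v => (R.getD id) (Sum.elim l.coloring r.coloring v)

def graph : (t : NLCTree k) → SimpleGraph t.V
  | leaf _ => ⊥
  | node S _ l r => joinGraph l.graph r.graph l.coloring r.coloring S

/-- The depth of the tree: maximum number of edges on a root-to-leaf path. -/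
def depth : NLCTree k → ℕ
  | leaf _ => 0
  | node _ _ l r => max l.depth r.depth + 1

end NLCTree

/-!
A decomposition is balanced by the classical separator argument. An expression of size `m ≥ 2`
has a subexpression `s` of size between `m/3` and `2m/3`; write the expression as `C[s]` for a
one-hole context `C`. A context is split in turn by cutting its spine (the path from the root to
the hole) at the join where the part below first exceeds two thirds of its size. Realizing the
pieces recursively and gluing them at a new root gives depth `O(log n)`, since the sizes shrink by
a factor `2/3` every constant number of levels.

Gluing `C` and `s` at the root needs all recolorings and edges between them to be decided there,
so every vertex of a context remembers, besides its color, the set of colors of hole vertices it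
is adjacent to, and every vertex a flag for its side of the join: `k · 2 ^ k · 2` colors.
-/

def Equiv.sumRightComm (α β γ : Type*) : (α ⊕ β) ⊕ γ ≃ (α ⊕ γ) ⊕ β :=
  (sumAssoc α β γ).trans <| ((Equiv.refl α).sumCongr (sumComm β γ)).trans (sumAssoc α γ β).symm

namespace SimpleGraph

variable {α β α' β' Γ₁ Γ₂ Γ₁' Γ₂' : Type}

/-- `joinGraph` with colorings in arbitrary types, joined along an arbitrary relation. -/
def joinAlong (G₁ : SimpleGraph α) (G₂ : SimpleGraph β) (c₁ : α → Γ₁) (c₂ : β → Γ₂)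
    (S : Γ₁ → Γ₂ → Prop) : SimpleGraph (α ⊕ β) where
  Adj x y :=
    match x, y with
    | .inl a, .inl b => G₁.Adj a b
    | .inr a, .inr b => G₂.Adj a b
    | .inl a, .inr b => S (c₁ a) (c₂ b)
    | .inr b, .inl a => S (c₁ a) (c₂ b)
  symm := ⟨by
    rintro (a | a) (b | b) h
    · exact G₁.adj_symm h
    · exact h
    · exact h
    · exact G₂.adj_symm h⟩
  loopless := ⟨by
    rintro (a | a) h
    · exact G₁.irrefl h
    · exact G₂.irrefl h⟩

variable {G₁ : SimpleGraph α} {G₂ : SimpleGraph β} {c₁ : α → Γ₁} {c₂ : β → Γ₂}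
  {S : Γ₁ → Γ₂ → Prop}

def Iso.joinAlong {G₁' : SimpleGraph α'} {G₂' : SimpleGraph β'} {c₁' : α' → Γ₁'}
    {c₂' : β' → Γ₂'} {S' : Γ₁' → Γ₂' → Prop} (e₁ : G₁ ≃g G₁') (e₂ : G₂ ≃g G₂')
    (hS : ∀ a b, S' (c₁' (e₁ a)) (c₂' (e₂ b)) ↔ S (c₁ a) (c₂ b)) :
    joinAlong G₁ G₂ c₁ c₂ S ≃g joinAlong G₁' G₂' c₁' c₂' S' where
  toEquiv := e₁.toEquiv.sumCongr e₂.toEquiv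
  map_rel_iff' := by
    rintro (a | a) (b | b)
    · exact e₁.map_adj_iff
    · exact hS a b
    · exact hS b a
    · exact e₂.map_adj_iff

def joinAlongIsoOfIsEmptyLeft [IsEmpty α] : joinAlong G₁ G₂ c₁ c₂ S ≃g G₂ where
  toEquiv := Equiv.emptySum α β
  map_rel_iff' := by
    rintro (a | a) (b | b) <;> first | exact isEmptyElim a | exact isEmptyElim b | rfl

def joinAlongIsoOfIsEmptyRight [IsEmpty β] : joinAlong G₁ G₂ c₁ c₂ S ≃g G₁ where
  toEquiv := Equiv.sumEmpty α β
  map_rel_iff' := by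
    rintro (a | a) (b | b) <;> first | exact isEmptyElim a | exact isEmptyElim b | rfl

end SimpleGraph

open SimpleGraph

/-- NLC-decomposition trees over an arbitrary type of colors. -/
inductive DecompTree (γ : Type) : Type
  | leaf (c : γ) : DecompTree γ
  | node (S : γ → γ → Prop) (R : γ → γ) (l r : DecompTree γ) : DecompTree γ

namespace DecompTree

variable {γ β β' β₁ β₂ Γ₁ Γ₂ : Type}

def V : DecompTree γ → Type
  | leaf _ => Unit
  | node _ _ l r => l.V ⊕ r.V

def coloring : (T : DecompTree γ) → T.V → γ
  | leaf c => fun _ => c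
  | node _ R l r => R ∘ Sum.elim l.coloring r.coloring

def graph : (T : DecompTree γ) → SimpleGraph T.V
  | leaf _ => ⊥
  | node S _ l r => joinAlong l.graph r.graph l.coloring r.coloring S

def depth : DecompTree γ → ℕ
  | leaf _ => 0
  | node _ _ l r => max l.depth r.depth + 1

def Realizes (T : DecompTree γ) (G : SimpleGraph β) (f : β → γ) : Prop :=
  ∃ e : G ≃g T.graph, ∀ v, T.coloring (e v) = f v

lemma Realizes.of_iso {T : DecompTree γ} {G : SimpleGraph β} {G' : SimpleGraph β'}
    {f : β → γ} {f' : β' → γ} (h : T.Realizes G f) (e : G ≃g G') (hf : ∀ v, f' (e v) = f v) :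
    T.Realizes G' f' := by
  obtain ⟨e₀, h₀⟩ := h
  refine ⟨e.symm.trans e₀, fun v => ?_⟩
  simpa using (h₀ (e.symm v)).trans (hf (e.symm v)).symm

lemma Realizes.node {T₁ T₂ : DecompTree γ} {G₁ : SimpleGraph β₁} {G₂ : SimpleGraph β₂}
    {G : SimpleGraph β} {f₁ : β₁ → γ} {f₂ : β₂ → γ} {f : β → γ} {c₁ : β₁ → Γ₁} {c₂ : β₂ → Γ₂}
    {S₀ : Γ₁ → Γ₂ → Prop} (S : γ → γ → Prop) (R : γ → γ)
    (h₁ : T₁.Realizes G₁ f₁) (h₂ : T₂.Realizes G₂ f₂) (e : joinAlong G₁ G₂ c₁ c₂ S₀ ≃g G)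
    (hS : ∀ a b, S (f₁ a) (f₂ b) ↔ S₀ (c₁ a) (c₂ b))
    (hf : ∀ z, f (e z) = R (Sum.elim f₁ f₂ z)) :
    (DecompTree.node S R T₁ T₂).Realizes G f := by
  obtain ⟨e₁, hc₁⟩ := h₁
  obtain ⟨e₂, hc₂⟩ := h₂
  have h : (DecompTree.node S R T₁ T₂).Realizes (joinAlong G₁ G₂ c₁ c₂ S₀)
      (R ∘ Sum.elim f₁ f₂) :=
    ⟨Iso.joinAlong e₁ e₂ (by simpa [hc₁, hc₂] using hS), by
      rintro (a | a)
      · exact congrArg R (hc₁ a)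
      · exact congrArg R (hc₂ a)⟩
  exact h.of_iso e hf

lemma exists_realizes_of_card_eq_one [Fintype β] (h : Fintype.card β = 1) (G : SimpleGraph β)
    (f : β → γ) : ∃ T : DecompTree γ, T.Realizes G f ∧ T.depth = 0 := by
  obtain ⟨v₀, hv⟩ := Fintype.card_eq_one_iff.mp h
  refine ⟨leaf (f v₀), ⟨⟨⟨fun _ => (), fun _ => v₀, fun v => (hv v).symm, fun _ => rfl⟩, ?_⟩,
    fun v => by rw [hv v]; rfl⟩, rfl⟩
  intro a b
  rw [hv a, hv b]
  simp [graph]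

lemma exists_nlcTree {K : ℕ} (φ : γ ≃ Fin K) : ∀ T : DecompTree γ,
    ∃ (T' : NLCTree K) (e : T.graph ≃g T'.graph),
      (∀ v, T'.coloring (e v) = φ (T.coloring v)) ∧ T'.depth = T.depth
  | leaf c => ⟨.leaf (φ c), Iso.refl, fun _ => rfl, rfl⟩
  | node S R l r => by
    obtain ⟨l', e₁, hc₁, hd₁⟩ := exists_nlcTree φ l
    obtain ⟨r', e₂, hc₂, hd₂⟩ := exists_nlcTree φ r
    let S' : Set (Fin K × Fin K) := {p | S (φ.symm p.1) (φ.symm p.2)}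
    refine ⟨.node S' (some (φ ∘ R ∘ φ.symm)) l' r',
      Iso.joinAlong (S' := fun a b => (a, b) ∈ S') e₁ e₂ (by simp [S', hc₁, hc₂]), ?_,
      by simp [depth, NLCTree.depth, hd₁, hd₂]⟩
    rintro (a | a)
    · show φ (R (φ.symm (l'.coloring (e₁ a)))) = φ (R (l.coloring a))
      simp [hc₁]
    · show φ (R (φ.symm (r'.coloring (e₂ a)))) = φ (R (r.coloring a))
      simp [hc₂]

end DecompTree

namespace NLCExpr

variable {k : ℕ}

def size : NLCExpr k → ℕ
  | single _ => 1
  | join _ t₁ t₂ => t₁.size + t₂.size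
  | recolor _ t => t.size

lemma size_pos : ∀ t : NLCExpr k, 0 < t.size
  | single _ => Nat.one_pos
  | join _ t₁ _ => Nat.add_pos_left t₁.size_pos _
  | recolor _ t => t.size_pos

instance instFintypeV : (t : NLCExpr k) → Fintype t.V
  | single _ => inferInstanceAs (Fintype Unit)
  | join _ t₁ t₂ =>
    letI := instFintypeV t₁
    letI := instFintypeV t₂
    inferInstanceAs (Fintype (t₁.V ⊕ t₂.V))
  | recolor _ t => instFintypeV t

lemma card_V : ∀ t : NLCExpr k, Fintype.card t.V = t.size
  | single _ => Fintype.card_unit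
  | join _ t₁ t₂ =>
    (Fintype.card_sum (α := t₁.V) (β := t₂.V)).trans (by rw [card_V t₁, card_V t₂]; rfl)
  | recolor _ t => card_V t

end NLCExpr

inductive NLCContext (k : ℕ) : Type
  | hole : NLCContext k
  | joinL (S : Set (Fin k × Fin k)) (C : NLCContext k) (s : NLCExpr k) : NLCContext k
  | joinR (S : Set (Fin k × Fin k)) (s : NLCExpr k) (C : NLCContext k) : NLCContext k
  | recolor (R : Fin k → Fin k) (C : NLCContext k) : NLCContext k

namespace NLCContext

variable {k : ℕ}

def fill : NLCContext k → NLCExpr k → NLCExpr k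
  | hole, t => t
  | joinL S C s, t => .join S (C.fill t) s
  | joinR S s C, t => .join S s (C.fill t)
  | recolor R C, t => .recolor R (C.fill t)

def V : NLCContext k → Type
  | hole => Empty
  | joinL _ C s => C.V ⊕ s.V
  | joinR _ s C => s.V ⊕ C.V
  | recolor _ C => C.V

def size : NLCContext k → ℕ
  | hole => 0
  | joinL _ C s => C.size + s.size
  | joinR _ s C => s.size + C.size
  | recolor _ C => C.size

instance instFintypeV : (C : NLCContext k) → Fintype C.V
  | hole => inferInstanceAs (Fintype Empty)
  | joinL _ C s =>
    letI := instFintypeV C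
    inferInstanceAs (Fintype (C.V ⊕ s.V))
  | joinR _ s C =>
    letI := instFintypeV C
    inferInstanceAs (Fintype (s.V ⊕ C.V))
  | recolor _ C => instFintypeV C

lemma card_V : ∀ C : NLCContext k, Fintype.card C.V = C.size
  | hole => Fintype.card_empty
  | joinL _ C s =>
    (Fintype.card_sum (α := C.V) (β := s.V)).trans (by rw [card_V C, s.card_V]; rfl)
  | joinR _ s C =>
    (Fintype.card_sum (α := s.V) (β := C.V)).trans (by rw [card_V C, s.card_V]; rfl)
  | recolor _ C => card_V C

lemma isEmpty_V_of_size_eq_zero {C : NLCContext k} (h : C.size = 0) : IsEmpty C.V :=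
  Fintype.card_eq_zero_iff.mp (C.card_V.trans h)

lemma size_fill : ∀ (C : NLCContext k) (t : NLCExpr k), (C.fill t).size = C.size + t.size
  | hole, t => (Nat.zero_add _).symm
  | joinL _ C s, t => by simp only [fill, NLCExpr.size, size, size_fill C t]; omega
  | joinR _ s C, t => by simp only [fill, NLCExpr.size, size, size_fill C t]; omega
  | recolor _ C, t => size_fill C t

def coloring : (C : NLCContext k) → C.V → Fin k
  | hole => Empty.elim
  | joinL _ C s => Sum.elim C.coloring s.coloring
  | joinR _ s C => Sum.elim s.coloring C.coloring
  | recolor R C => R ∘ C.coloring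

def holeRecolor : NLCContext k → Fin k → Fin k
  | hole => id
  | joinL _ C _ => C.holeRecolor
  | joinR _ _ C => C.holeRecolor
  | recolor R C => R ∘ C.holeRecolor

/-- `C.adjHole w` is the set of colors `c` such that `w` is adjacent to every vertex of the hole
whose color in the plugged expression is `c`. -/
def adjHole : (C : NLCContext k) → C.V → Set (Fin k)
  | hole => Empty.elim
  | joinL S C s => Sum.elim C.adjHole fun w => {c | (C.holeRecolor c, s.coloring w) ∈ S}
  | joinR S s C => Sum.elim (fun w => {c | (s.coloring w, C.holeRecolor c) ∈ S}) C.adjHole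
  | recolor _ C => C.adjHole

def graph : (C : NLCContext k) → SimpleGraph C.V
  | hole => ⊥
  | joinL S C s => joinGraph C.graph s.graph C.coloring s.coloring S
  | joinR S s C => joinGraph s.graph C.graph s.coloring C.coloring S
  | recolor _ C => C.graph

def fillEquiv : (C : NLCContext k) → (t : NLCExpr k) → C.V ⊕ t.V ≃ (C.fill t).V
  | hole, t => Equiv.emptySum Empty t.V
  | joinL _ C s, t =>
    (Equiv.sumRightComm _ _ _).trans ((C.fillEquiv t).sumCongr (Equiv.refl s.V))
  | joinR _ s C, t => (Equiv.sumAssoc _ _ _).trans ((Equiv.refl s.V).sumCongr (C.fillEquiv t))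
  | recolor _ C, t => C.fillEquiv t

lemma coloring_fillEquiv : ∀ (C : NLCContext k) (t : NLCExpr k) (z : C.V ⊕ t.V),
    (C.fill t).coloring (C.fillEquiv t z) = Sum.elim C.coloring (C.holeRecolor ∘ t.coloring) z
  | hole, _, .inl w => w.elim
  | hole, _, .inr _ => rfl
  | joinL _ C _, t, .inl (.inl w) => coloring_fillEquiv C t (.inl w)
  | joinL _ _ _, _, .inl (.inr _) => rfl
  | joinL _ C _, t, .inr x => coloring_fillEquiv C t (.inr x)
  | joinR _ _ _, _, .inl (.inl _) => rfl
  | joinR _ _ C, t, .inl (.inr w) => coloring_fillEquiv C t (.inl w)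
  | joinR _ _ C, t, .inr x => coloring_fillEquiv C t (.inr x)
  | recolor R C, t, .inl w => congrArg R (coloring_fillEquiv C t (.inl w))
  | recolor R C, t, .inr x => congrArg R (coloring_fillEquiv C t (.inr x))

lemma adj_fillEquiv (C : NLCContext k) (t : NLCExpr k) (z₁ z₂ : C.V ⊕ t.V) :
    (C.fill t).graph.Adj (C.fillEquiv t z₁) (C.fillEquiv t z₂) ↔
      (joinAlong C.graph t.graph C.adjHole t.coloring fun A c => c ∈ A).Adj z₁ z₂ := by
  induction C with
  | hole =>
    rcases z₁ with w | x
    · exact w.elim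
    rcases z₂ with w | y
    · exact w.elim
    rfl
  | joinL S C s ih =>
    rcases z₁ with (w₁ | u₁) | x₁ <;> rcases z₂ with (w₂ | u₂) | x₂ <;>
      first
      | exact ih _ _
      | rfl
      | exact iff_of_eq (congrArg (fun c => (c, _) ∈ S) (coloring_fillEquiv C t _))
  | joinR S s C ih =>
    rcases z₁ with (u₁ | w₁) | x₁ <;> rcases z₂ with (u₂ | w₂) | x₂ <;>
      first
      | exact ih _ _
      | rfl
      | exact iff_of_eq (congrArg (fun c => (_, c) ∈ S) (coloring_fillEquiv C t _))
  | recolor R C ih => exact ih z₁ z₂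

def fillIso (C : NLCContext k) (t : NLCExpr k) :
    joinAlong C.graph t.graph C.adjHole t.coloring (fun A c => c ∈ A) ≃g (C.fill t).graph :=
  ⟨C.fillEquiv t, C.adj_fillEquiv t _ _⟩

def comp : NLCContext k → NLCContext k → NLCContext k
  | hole, D => D
  | joinL S C s, D => joinL S (C.comp D) s
  | joinR S s C, D => joinR S s (C.comp D)
  | recolor R C, D => recolor R (C.comp D)

lemma size_comp : ∀ C D : NLCContext k, (C.comp D).size = C.size + D.size
  | hole, D => (Nat.zero_add _).symm
  | joinL _ C s, D => by simp only [comp, size, size_comp C D]; omega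
  | joinR _ s C, D => by simp only [comp, size, size_comp C D]; omega
  | recolor _ C, D => size_comp C D

lemma holeRecolor_comp : ∀ C D : NLCContext k,
    (C.comp D).holeRecolor = C.holeRecolor ∘ D.holeRecolor
  | hole, _ => rfl
  | joinL _ C _, D => holeRecolor_comp C D
  | joinR _ _ C, D => holeRecolor_comp C D
  | recolor R C, D => congrArg (R ∘ ·) (holeRecolor_comp C D)

def compEquiv : (C D : NLCContext k) → C.V ⊕ D.V ≃ (C.comp D).V
  | hole, D => Equiv.emptySum Empty D.V
  | joinL _ C s, D =>
    (Equiv.sumRightComm _ _ _).trans ((C.compEquiv D).sumCongr (Equiv.refl s.V))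
  | joinR _ s C, D => (Equiv.sumAssoc _ _ _).trans ((Equiv.refl s.V).sumCongr (C.compEquiv D))
  | recolor _ C, D => C.compEquiv D

lemma coloring_compEquiv : ∀ (C D : NLCContext k) (z : C.V ⊕ D.V),
    (C.comp D).coloring (C.compEquiv D z) = Sum.elim C.coloring (C.holeRecolor ∘ D.coloring) z
  | hole, _, .inl w => w.elim
  | hole, _, .inr _ => rfl
  | joinL _ C _, D, .inl (.inl w) => coloring_compEquiv C D (.inl w)
  | joinL _ _ _, _, .inl (.inr _) => rfl
  | joinL _ C _, D, .inr x => coloring_compEquiv C D (.inr x)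
  | joinR _ _ _, _, .inl (.inl _) => rfl
  | joinR _ _ C, D, .inl (.inr w) => coloring_compEquiv C D (.inl w)
  | joinR _ _ C, D, .inr x => coloring_compEquiv C D (.inr x)
  | recolor R C, D, .inl w => congrArg R (coloring_compEquiv C D (.inl w))
  | recolor R C, D, .inr x => congrArg R (coloring_compEquiv C D (.inr x))

lemma adjHole_compEquiv : ∀ (C D : NLCContext k) (z : C.V ⊕ D.V),
    (C.comp D).adjHole (C.compEquiv D z) =
      Sum.elim (fun w => D.holeRecolor ⁻¹' C.adjHole w) D.adjHole z
  | hole, _, .inl w => w.elim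
  | hole, _, .inr _ => rfl
  | joinL _ C _, D, .inl (.inl w) => adjHole_compEquiv C D (.inl w)
  | joinL S C s, D, .inl (.inr u) => by
    show {c | ((C.comp D).holeRecolor c, s.coloring u) ∈ S} = _
    rw [holeRecolor_comp]
    rfl
  | joinL _ C _, D, .inr x => adjHole_compEquiv C D (.inr x)
  | joinR S s C, D, .inl (.inl u) => by
    show {c | (s.coloring u, (C.comp D).holeRecolor c) ∈ S} = _
    rw [holeRecolor_comp]
    rfl
  | joinR _ _ C, D, .inl (.inr w) => adjHole_compEquiv C D (.inl w)
  | joinR _ _ C, D, .inr x => adjHole_compEquiv C D (.inr x)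
  | recolor _ C, D, z => adjHole_compEquiv C D z

lemma adj_compEquiv (C D : NLCContext k) (z₁ z₂ : C.V ⊕ D.V) :
    (C.comp D).graph.Adj (C.compEquiv D z₁) (C.compEquiv D z₂) ↔
      (joinAlong C.graph D.graph C.adjHole D.coloring fun A c => c ∈ A).Adj z₁ z₂ := by
  induction C with
  | hole =>
    rcases z₁ with w | x
    · exact w.elim
    rcases z₂ with w | y
    · exact w.elim
    rfl
  | joinL S C s ih =>
    rcases z₁ with (w₁ | u₁) | x₁ <;> rcases z₂ with (w₂ | u₂) | x₂ <;>
      first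
      | exact ih _ _
      | rfl
      | exact iff_of_eq (congrArg (fun c => (c, _) ∈ S) (coloring_compEquiv C D _))
  | joinR S s C ih =>
    rcases z₁ with (u₁ | w₁) | x₁ <;> rcases z₂ with (u₂ | w₂) | x₂ <;>
      first
      | exact ih _ _
      | rfl
      | exact iff_of_eq (congrArg (fun c => (_, c) ∈ S) (coloring_compEquiv C D _))
  | recolor R C ih => exact ih z₁ z₂

def compIso (C D : NLCContext k) :
    joinAlong C.graph D.graph C.adjHole D.coloring (fun A c => c ∈ A) ≃g (C.comp D).graph :=
  ⟨C.compEquiv D, C.adj_compEquiv D _ _⟩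

lemma exists_fill_eq_of_size_le : ∀ (t : NLCExpr k) {m : ℕ}, 2 ≤ m → t.size ≤ m →
    2 * m < 3 * t.size → ∃ (C : NLCContext k) (s : NLCExpr k),
      C.fill s = t ∧ m < 3 * s.size ∧ 3 * s.size ≤ 2 * m
  | .single _, _, hm, _, h => by simp only [NLCExpr.size] at h; omega
  | .recolor R t, _, hm, hle, hgt => by
    obtain ⟨C, s, rfl, hs⟩ := exists_fill_eq_of_size_le t hm hle hgt
    exact ⟨.recolor R C, s, rfl, hs⟩
  | .join S a b, m, hm, hle, hgt => by
    simp only [NLCExpr.size] at hle hgt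
    by_cases ha : 2 * m < 3 * a.size
    · obtain ⟨C, s, rfl, hs⟩ := exists_fill_eq_of_size_le a hm (by omega) ha
      exact ⟨.joinL S C b, s, rfl, hs⟩
    by_cases hb : 2 * m < 3 * b.size
    · obtain ⟨C, s, rfl, hs⟩ := exists_fill_eq_of_size_le b hm (by omega) hb
      exact ⟨.joinR S a C, s, rfl, hs⟩
    rcases le_total b.size a.size with h | h
    · exact ⟨.joinL S .hole b, a, rfl, by omega, by omega⟩
    · exact ⟨.joinR S a .hole, b, rfl, by omega, by omega⟩

def IsJoinStep (M D : NLCContext k) (s : NLCExpr k) : Prop :=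
  ∃ S, M = joinL S D s ∨ M = joinR S s D

lemma IsJoinStep.size_eq {M D : NLCContext k} {s : NLCExpr k} (h : M.IsJoinStep D s) :
    M.size = D.size + s.size := by
  obtain ⟨S, rfl | rfl⟩ := h
  · rfl
  · exact Nat.add_comm _ _

lemma exists_comp_isJoinStep : ∀ (C : NLCContext k) {θ : ℕ}, θ < C.size →
    ∃ (P M D : NLCContext k) (s : NLCExpr k),
      C = P.comp M ∧ M.IsJoinStep D s ∧ D.size ≤ θ ∧ θ < D.size + s.size
  | hole, _, h => absurd h (Nat.not_lt_zero _)
  | joinL S C s, θ, h => by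
    by_cases hC : C.size ≤ θ
    · exact ⟨hole, joinL S C s, C, s, rfl, ⟨S, .inl rfl⟩, hC, h⟩
    obtain ⟨P, M, D, s', rfl, hM⟩ := exists_comp_isJoinStep C (θ := θ) (by omega)
    exact ⟨joinL S P s, M, D, s', rfl, hM⟩
  | joinR S s C, θ, h => by
    by_cases hC : C.size ≤ θ
    · exact ⟨hole, joinR S s C, C, s, rfl, ⟨S, .inr rfl⟩, hC, by simp only [size] at h; omega⟩
    obtain ⟨P, M, D, s', rfl, hM⟩ := exists_comp_isJoinStep C (θ := θ) (by omega)
    exact ⟨joinR S s P, M, D, s', rfl, hM⟩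
  | recolor R C, _, h => by
    obtain ⟨P, M, D, s', rfl, hM⟩ := exists_comp_isJoinStep C h
    exact ⟨recolor R P, M, D, s', rfl, hM⟩

end NLCContext

/-- A vertex of a balanced tree carries its color, the set of colors of the hole vertices it is
adjacent to, and a flag distinguishing the two sides of a join. -/
abbrev TreeColor (k : ℕ) : Type := Fin k × Set (Fin k) × Bool

lemma card_treeColor (k : ℕ) : Fintype.card (TreeColor k) = k * 2 ^ (k + 1) := by
  simp [Fintype.card_set, pow_succ]

/- The quantified colorings anticipate what the surrounding tree needs: the recolorings applied
further up (`g`, `σ`), the recoloring of the hole (`τ`) and the side of the parent join (`b`). -/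

def NLCExpr.RealizableWithin {k : ℕ} (t : NLCExpr k) (d : ℕ) : Prop :=
  ∀ g : Fin k → TreeColor k, ∃ T : DecompTree (TreeColor k),
    T.Realizes t.graph (g ∘ t.coloring) ∧ T.depth ≤ d

def NLCContext.RealizableWithin {k : ℕ} (C : NLCContext k) (d : ℕ) : Prop :=
  ∀ (σ τ : Fin k → Fin k) (b : Bool), ∃ T : DecompTree (TreeColor k),
    T.Realizes C.graph (fun w => (σ (C.coloring w), τ ⁻¹' C.adjHole w, b)) ∧ T.depth ≤ d

namespace NLCExpr

variable {k : ℕ} {t : NLCExpr k} {d d' : ℕ}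

lemma RealizableWithin.mono (h : t.RealizableWithin d) (hd : d ≤ d') : t.RealizableWithin d' :=
  fun g => (h g).imp fun _ hT => ⟨hT.1, hT.2.trans hd⟩

lemma realizableWithin_zero_of_size_eq_one (h : t.size = 1) : t.RealizableWithin 0 :=
  fun _ => (DecompTree.exists_realizes_of_card_eq_one (t.card_V.trans h) _ _).imp
    fun _ hT => ⟨hT.1, hT.2.le⟩

end NLCExpr

namespace NLCContext

open DecompTree

variable {k : ℕ} {C D P M : NLCContext k} {s : NLCExpr k} {d d' d₁ d₂ : ℕ}

lemma RealizableWithin.mono (h : C.RealizableWithin d) (hd : d ≤ d') : C.RealizableWithin d' :=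
  fun σ τ b => (h σ τ b).imp fun _ hT => ⟨hT.1, hT.2.trans hd⟩

lemma realizableWithin_zero_of_size_eq_one (h : C.size = 1) : C.RealizableWithin 0 :=
  fun _ _ _ => (exists_realizes_of_card_eq_one (C.card_V.trans h) _ _).imp
    fun _ hT => ⟨hT.1, hT.2.le⟩

lemma realizableWithin_fill (hC : C.RealizableWithin d₁) (hs : s.RealizableWithin d₂) :
    (C.fill s).RealizableWithin (max d₁ d₂ + 1) := by
  intro g
  obtain ⟨T₁, h₁, hd₁⟩ := hC id id true
  obtain ⟨T₂, h₂, hd₂⟩ := hs fun c => (c, ∅, false)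
  refine ⟨.node (fun p q => q.1 ∈ p.2.1)
      (fun p => bif p.2.2 then g p.1 else g (C.holeRecolor p.1)) T₁ T₂,
    h₁.node _ _ h₂ (C.fillIso s) (fun _ _ => Iff.rfl) fun z => ?_,
    by simp only [depth]; omega⟩
  show g ((C.fill s).coloring (C.fillEquiv s z)) = _
  rw [coloring_fillEquiv]
  rcases z with w | x <;> rfl

lemma realizableWithin_joinL {S : Set (Fin k × Fin k)} (hD : 0 < D.size → D.RealizableWithin d₁)
    (hs : s.RealizableWithin d₂) : (joinL S D s).RealizableWithin (max d₁ d₂ + 1) := by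
  intro σ τ b
  by_cases hD₀ : D.size = 0
  · have := isEmpty_V_of_size_eq_zero hD₀
    obtain ⟨T, h, hd⟩ := hs fun c => (σ c, τ ⁻¹' {c' | (D.holeRecolor c', c) ∈ S}, b)
    exact ⟨T, h.of_iso (joinAlongIsoOfIsEmptyLeft (c₁ := D.coloring) (c₂ := s.coloring)
      (S := fun a b => (a, b) ∈ S)).symm fun _ => rfl, by omega⟩
  obtain ⟨T₁, h₁, hd₁⟩ := hD (by omega) id τ false
  obtain ⟨T₂, h₂, hd₂⟩ := hs fun c => (c, ∅, true)
  refine ⟨.node (fun p q => (p.1, q.1) ∈ S)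
      (fun p => (σ p.1, bif p.2.2 then τ ⁻¹' {c | (D.holeRecolor c, p.1) ∈ S} else p.2.1, b))
      T₁ T₂, h₁.node _ _ h₂ (Iso.refl (G := (joinL S D s).graph)) (c₁ := D.coloring)
        (c₂ := s.coloring) (S₀ := fun a b => (a, b) ∈ S) (fun _ _ => Iff.rfl) ?_,
    by simp only [depth]; omega⟩
  rintro (w | x) <;> rfl

lemma realizableWithin_joinR {S : Set (Fin k × Fin k)} (hD : 0 < D.size → D.RealizableWithin d₁)
    (hs : s.RealizableWithin d₂) : (joinR S s D).RealizableWithin (max d₁ d₂ + 1) := by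
  intro σ τ b
  by_cases hD₀ : D.size = 0
  · have := isEmpty_V_of_size_eq_zero hD₀
    obtain ⟨T, h, hd⟩ := hs fun c => (σ c, τ ⁻¹' {c' | (c, D.holeRecolor c') ∈ S}, b)
    exact ⟨T, h.of_iso (joinAlongIsoOfIsEmptyRight (c₁ := s.coloring) (c₂ := D.coloring)
      (S := fun a b => (a, b) ∈ S)).symm fun _ => rfl, by omega⟩
  obtain ⟨T₁, h₁, hd₁⟩ := hs fun c => (c, ∅, true)
  obtain ⟨T₂, h₂, hd₂⟩ := hD (by omega) id τ false
  refine ⟨.node (fun p q => (p.1, q.1) ∈ S)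
      (fun p => (σ p.1, bif p.2.2 then τ ⁻¹' {c | (p.1, D.holeRecolor c) ∈ S} else p.2.1, b))
      T₁ T₂, h₁.node _ _ h₂ (Iso.refl (G := (joinR S s D).graph)) (c₁ := s.coloring)
        (c₂ := D.coloring) (S₀ := fun a b => (a, b) ∈ S) (fun _ _ => Iff.rfl) ?_,
    by simp only [depth]; omega⟩
  rintro (x | w) <;> rfl

lemma IsJoinStep.realizableWithin (h : M.IsJoinStep D s)
    (hD : 0 < D.size → D.RealizableWithin d₁) (hs : s.RealizableWithin d₂) :
    M.RealizableWithin (max d₁ d₂ + 1) := by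
  obtain ⟨S, rfl | rfl⟩ := h
  · exact realizableWithin_joinL hD hs
  · exact realizableWithin_joinR hD hs

lemma realizableWithin_comp (hP : 0 < P.size → P.RealizableWithin d₁)
    (hM : M.RealizableWithin d₂) : (P.comp M).RealizableWithin (max d₁ d₂ + 1) := by
  intro σ τ b
  by_cases hP₀ : P.size = 0
  · have := isEmpty_V_of_size_eq_zero hP₀
    obtain ⟨T, h, hd⟩ := hM (σ ∘ P.holeRecolor) τ b
    refine ⟨T, h.of_iso (joinAlongIsoOfIsEmptyLeft.symm.trans (P.compIso M))
      fun w => ?_, by omega⟩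
    show (σ ((P.comp M).coloring (P.compEquiv M (.inr w))),
      τ ⁻¹' (P.comp M).adjHole (P.compEquiv M (.inr w)), b) = _
    rw [coloring_compEquiv, adjHole_compEquiv]
    rfl
  obtain ⟨T₁, h₁, hd₁⟩ := hP (by omega) σ id false
  obtain ⟨T₂, h₂, hd₂⟩ := hM id τ true
  refine ⟨.node (fun p q => q.1 ∈ p.2.1)
      (fun p => bif p.2.2 then (σ (P.holeRecolor p.1), p.2.1, b)
        else (p.1, τ ⁻¹' (M.holeRecolor ⁻¹' p.2.1), b)) T₁ T₂,
    h₁.node _ _ h₂ (P.compIso M) (fun _ _ => Iff.rfl) fun z => ?_,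
    by simp only [depth]; omega⟩
  show (σ ((P.comp M).coloring (P.compEquiv M z)), τ ⁻¹' (P.comp M).adjHole (P.compEquiv M z),
    b) = _
  rw [coloring_compEquiv, adjHole_compEquiv]
  rcases z with u | w <;> rfl

end NLCContext

/-- Each level of the recursion handles expressions half again as large as the level below. -/
def sizeBound : ℕ → ℕ
  | 0 => 1
  | j + 1 => sizeBound j + sizeBound j / 2 + 1

lemma le_sizeBound_of_three_mul_le {j x m : ℕ} (hm : m ≤ sizeBound (j + 1))
    (hx : 3 * x ≤ 2 * m) : x ≤ sizeBound j := by
  have : sizeBound (j + 1) = sizeBound j + sizeBound j / 2 + 1 := rfl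
  omega

lemma two_pow_le_sizeBound (j : ℕ) : 2 ^ j ≤ sizeBound (2 * j) := by
  induction j with
  | zero => rfl
  | succ j ih =>
    have h₁ : sizeBound (2 * j + 1) = sizeBound (2 * j) + sizeBound (2 * j) / 2 + 1 := rfl
    have h₂ : sizeBound (2 * j + 2) = sizeBound (2 * j + 1) + sizeBound (2 * j + 1) / 2 + 1 := rfl
    show 2 ^ (j + 1) ≤ sizeBound (2 * j + 2)
    rw [pow_succ, h₂]
    omega

section

variable {k : ℕ}

lemma NLCExpr.realizableWithin_of_size_le_succ {j : ℕ}
    (hexpr : ∀ t : NLCExpr k, t.size ≤ sizeBound j → t.RealizableWithin (3 * j))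
    (hctx : ∀ C : NLCContext k, 0 < C.size → C.size ≤ sizeBound j →
      C.RealizableWithin (3 * j + 2))
    (t : NLCExpr k) (ht : t.size ≤ sizeBound (j + 1)) : t.RealizableWithin (3 * j + 3) := by
  by_cases h₂ : 2 ≤ t.size
  · obtain ⟨C, s, rfl, hs⟩ := NLCContext.exists_fill_eq_of_size_le t h₂ le_rfl (by omega)
    have hsize := C.size_fill s
    exact (C.realizableWithin_fill
      (hctx C (by omega) (le_sizeBound_of_three_mul_le ht (by omega)))
      (hexpr s (le_sizeBound_of_three_mul_le ht (by omega)))).mono (by omega)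
  · exact (t.realizableWithin_zero_of_size_eq_one (by have := t.size_pos; omega)).mono
      (Nat.zero_le _)

lemma NLCContext.realizableWithin_of_size_le_succ {j : ℕ}
    (hctx : ∀ C : NLCContext k, 0 < C.size → C.size ≤ sizeBound j →
      C.RealizableWithin (3 * j + 2))
    (hexpr : ∀ t : NLCExpr k, t.size ≤ sizeBound (j + 1) → t.RealizableWithin (3 * j + 3))
    (C : NLCContext k) (h₀ : 0 < C.size) (hC : C.size ≤ sizeBound (j + 1)) :
    C.RealizableWithin (3 * j + 5) := by
  by_cases h₂ : 2 ≤ C.size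
  · -- Cut the spine where the part below first exceeds two thirds of the size: the contexts
    -- `D` below and `P` above the cut are then small, and `s` is handled at the same level.
    obtain ⟨P, M, D, s, rfl, hM, hD, hDs⟩ := C.exists_comp_isJoinStep (θ := 2 * C.size / 3)
      (by omega)
    have hsize : (P.comp M).size = P.size + D.size + s.size := by
      rw [size_comp, hM.size_eq, Nat.add_assoc]
    have hMr := hM.realizableWithin (d₁ := 3 * j + 2)
      (fun h => hctx D h (le_sizeBound_of_three_mul_le hC (by omega))) (hexpr s (by omega))
    exact (realizableWithin_comp
      (fun h => hctx P h (le_sizeBound_of_three_mul_le hC (by omega))) hMr).mono (by omega)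
  · exact (realizableWithin_zero_of_size_eq_one (by omega)).mono (Nat.zero_le _)

lemma realizableWithin_of_size_le_sizeBound (j : ℕ) :
    (∀ t : NLCExpr k, t.size ≤ sizeBound j → t.RealizableWithin (3 * j)) ∧
      ∀ C : NLCContext k, 0 < C.size → C.size ≤ sizeBound j → C.RealizableWithin (3 * j + 2) := by
  induction j with
  | zero =>
    refine ⟨fun t ht => t.realizableWithin_zero_of_size_eq_one ?_, fun C h₀ hC =>
      (C.realizableWithin_zero_of_size_eq_one (by simp only [sizeBound] at hC; omega)).mono
        (Nat.zero_le _)⟩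
    have := t.size_pos
    simp only [sizeBound] at ht
    omega
  | succ j ih =>
    have hexpr := NLCExpr.realizableWithin_of_size_le_succ ih.1 ih.2
    exact ⟨hexpr, NLCContext.realizableWithin_of_size_le_succ ih.2 hexpr⟩

lemma NLCExpr.exists_nlcTree_depth_le {j : ℕ} (t : NLCExpr k) (ht : t.size ≤ sizeBound j) :
    ∃ T : NLCTree (k * 2 ^ (k + 1)), Nonempty (t.graph ≃g T.graph) ∧ T.depth ≤ 3 * j := by
  obtain ⟨T, ⟨e, -⟩, hT⟩ :=
    (realizableWithin_of_size_le_sizeBound j).1 t ht fun c => (c, ∅, false)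
  obtain ⟨T', e', -, hd⟩ := T.exists_nlcTree (Fintype.equivFinOfCardEq (card_treeColor k))
  exact ⟨T', ⟨e.trans e'⟩, hd ▸ hT⟩

end

/-- For every `k ≥ 1` there is a constant `C = C(k)` such that every finite simple graph on
`n ≥ 2` vertices of NLC-width at most `k` admits an NLC-decomposition tree of width
`k · 2^(k+1)` and depth at most `C · log₂ n`. -/
theorem exists_log_depth_NLC_decomposition :
    ∀ k : ℕ, 1 ≤ k → ∃ C : ℕ, 0 < C ∧
      ∀ (V : Type) [Fintype V] (G : SimpleGraph V) (n : ℕ),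
        Fintype.card V = n → 2 ≤ n → HasNLCWidthLE G k →
        ∃ T : NLCTree (k * 2 ^ (k + 1)),
          Nonempty (G ≃g T.graph) ∧ T.depth ≤ C * Nat.log 2 n := by
  intro k _
  refine ⟨12, by norm_num, fun V _ G n hcard hn ⟨t, ⟨e⟩⟩ => ?_⟩
  have hsize : t.size = n := by rw [← t.card_V, ← hcard, Fintype.card_congr e.toEquiv]
  have hbound : t.size ≤ sizeBound (2 * (Nat.log 2 n + 1)) :=
    hsize ▸ (Nat.lt_pow_succ_log_self Nat.one_lt_two n).le.trans (two_pow_le_sizeBound _)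
  obtain ⟨T, ⟨e'⟩, hT⟩ := t.exists_nlcTree_depth_le hbound
  have hlog : 0 < Nat.log 2 n := Nat.log_pos Nat.one_lt_two hn
  exact ⟨T, ⟨e.trans e'⟩, by omega⟩
end

section
/- Every connected cograph has a rooted spanning tree of depth at most 2 in which every node at depth 1 has at most one child. Equivalently: for every connected cograph G with at least one vertex, there exist a vertex r of G, a subset A of the neighbors of r, and an injective map f from V(G) \ ({r} ∪ A) to A such that every vertex v in the domain of f is adjacent to f(v) in G. -/
/-!
Only the outermost operation of a cograph decomposition matters. A disjoint union of two
nonempty graphs is disconnected, so a connected cograph with more than one vertex is a join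
`A + B` with `|A| ≤ |B|`, say. Rooting at any `r ∈ A`, all of `B` is adjacent to `r` and forms
the depth-one layer, and the at most `|B| - 1` vertices of `A \ {r}` are all adjacent to every
vertex of `B`, so they can be attached to distinct vertices of `B`.
-/

/-- `CographOn G s` says that the subgraph of `G` induced by `s` can be obtained from
single vertices by disjoint unions (no edges between the parts) and joins (all edges
between the parts). -/
inductive CographOn {V : Type*} (G : SimpleGraph V) : Set V → Prop
  | single (v : V) : CographOn G {v}
  | union {A B : Set V} (hd : Disjoint A B) (h : ∀ a ∈ A, ∀ b ∈ B, ¬ G.Adj a b)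
      (hA : CographOn G A) (hB : CographOn G B) : CographOn G (A ∪ B)
  | join {A B : Set V} (hd : Disjoint A B) (h : ∀ a ∈ A, ∀ b ∈ B, G.Adj a b)
      (hA : CographOn G A) (hB : CographOn G B) : CographOn G (A ∪ B)

/-- A graph is a cograph if it belongs to the smallest class of graphs containing the
one-vertex graph and closed under disjoint union and join. -/
def IsCograph {V : Type*} (G : SimpleGraph V) : Prop :=
  CographOn G Set.univ

namespace SimpleGraph

variable {V : Type*} (G : SimpleGraph V)

/-- `A` is the set of depth-one vertices of a spanning tree rooted at `r`, and `f` sends each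
deeper vertex to its parent; injectivity of `f` says that every vertex of `A` has at most one
child. -/
def HasDepthTwoSpanningTree : Prop :=
  ∃ (r : V) (A : Set V), A ⊆ G.neighborSet r ∧
    ∃ f : {v : V // v ≠ r ∧ v ∉ A} → A,
      Function.Injective f ∧ ∀ v : {v : V // v ≠ r ∧ v ∉ A}, G.Adj (v : V) (f v : V)

variable {G}

lemma hasDepthTwoSpanningTree_of_subsingleton [Subsingleton V] (r : V) :
    G.HasDepthTwoSpanningTree := by
  have : IsEmpty {v : V // v ≠ r ∧ v ∉ (∅ : Set V)} := ⟨fun v ↦ v.2.1 (Subsingleton.elim _ _)⟩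
  exact ⟨r, ∅, Set.empty_subset _, isEmptyElim, fun v ↦ isEmptyElim v, isEmptyElim⟩

lemma not_preconnected_of_isCompl {A B : Set V} (hAB : IsCompl A B)
    (hnadj : ∀ a ∈ A, ∀ b ∈ B, ¬ G.Adj a b) (hA : A.Nonempty) (hB : B.Nonempty) :
    ¬ G.Preconnected := by
  intro hconn
  obtain ⟨a, ha⟩ := hA
  obtain ⟨b, hb⟩ := hB
  obtain ⟨w⟩ := hconn a b
  obtain ⟨d, -, hd₁, hd₂⟩ := w.exists_boundary_dart A ha (hAB.disjoint.notMem_of_mem_right hb)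
  exact hnadj _ hd₁ _ (hAB.compl_eq ▸ hd₂) d.adj

lemma hasDepthTwoSpanningTree_of_join_of_card_le [Finite V] {A B : Set V} (hAB : IsCompl A B)
    (hadj : ∀ a ∈ A, ∀ b ∈ B, G.Adj a b) {r : V} (hr : r ∈ A)
    (hcard : Nat.card A ≤ Nat.card B) : G.HasDepthTwoSpanningTree := by
  classical
  have := Fintype.ofFinite V
  refine ⟨r, B, fun b hb ↦ hadj r hr b hb, ?_⟩
  have hmem (v : {v : V // v ≠ r ∧ v ∉ B}) : (v : V) ∈ A := hAB.eq_compl ▸ v.2.2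
  have hlt : Fintype.card {v : V // v ≠ r ∧ v ∉ B} < Fintype.card A :=
    Fintype.card_lt_of_injective_of_notMem (fun v ↦ ⟨v, hmem v⟩)
      (fun v w h ↦ Subtype.ext (congrArg Subtype.val h :)) (b := ⟨r, hr⟩)
      (fun ⟨v, hv⟩ ↦ v.2.1 (congrArg Subtype.val hv))
  rw [Nat.card_eq_fintype_card, Nat.card_eq_fintype_card] at hcard
  obtain ⟨f⟩ := Function.Embedding.nonempty_of_card_le (hlt.le.trans hcard)
  exact ⟨f, f.injective, fun v ↦ hadj v (hmem v) (f v) (f v).2⟩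

lemma hasDepthTwoSpanningTree_of_join [Finite V] {A B : Set V} (hAB : IsCompl A B)
    (hadj : ∀ a ∈ A, ∀ b ∈ B, G.Adj a b) (hA : A.Nonempty) (hB : B.Nonempty) :
    G.HasDepthTwoSpanningTree := by
  rcases le_total (Nat.card A) (Nat.card B) with hle | hle
  · exact hasDepthTwoSpanningTree_of_join_of_card_le hAB hadj hA.some_mem hle
  · exact hasDepthTwoSpanningTree_of_join_of_card_le hAB.symm
      (fun b hb a ha ↦ (hadj a ha b hb).symm) hB.some_mem hle

end SimpleGraph

lemma CographOn.nonempty {V : Type*} {G : SimpleGraph V} {s : Set V} (h : CographOn G s) :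
    s.Nonempty := by
  induction h with
  | single v => exact Set.singleton_nonempty v
  | union _ _ _ _ ihA => exact ihA.mono Set.subset_union_left
  | join _ _ _ _ ihA => exact ihA.mono Set.subset_union_left

/-- Every connected cograph has a rooted spanning tree of depth at most 2 in which every
node at depth 1 has at most one child: there are a root `r`, a set `A` of neighbors of
`r` (the depth-1 nodes), and an injective assignment of the remaining vertices to
distinct elements of `A`, each remaining vertex being adjacent to the element it is
assigned to. -/
theorem connected_cograph_has_depth_two_spanning_tree
    (V : Type*) [Fintype V] (G : SimpleGraph V) (hG : IsCograph G) (hc : G.Connected) :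
    ∃ (r : V) (A : Set V), A ⊆ G.neighborSet r ∧
      ∃ f : {v : V // v ≠ r ∧ v ∉ A} → A,
        Function.Injective f ∧ ∀ v : {v : V // v ≠ r ∧ v ∉ A}, G.Adj (v : V) (f v : V) := by
  have isCompl_of_union_eq_univ {A B : Set V} (hd : Disjoint A B) (h : A ∪ B = Set.univ) :
      IsCompl A B := ⟨hd, codisjoint_iff.2 h⟩
  unfold IsCograph at hG
  generalize huniv : (Set.univ : Set V) = s at hG
  cases hG with
  | single r =>
    have : Subsingleton V := Set.subsingleton_univ_iff.1 (huniv ▸ Set.subsingleton_singleton)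
    exact SimpleGraph.hasDepthTwoSpanningTree_of_subsingleton r
  | union hd hnadj hA hB =>
    exact absurd hc.preconnected <| SimpleGraph.not_preconnected_of_isCompl
      (isCompl_of_union_eq_univ hd huniv.symm) hnadj hA.nonempty hB.nonempty
  | join hd hadj hA hB =>
    exact SimpleGraph.hasDepthTwoSpanningTree_of_join
      (isCompl_of_union_eq_univ hd huniv.symm) hadj hA.nonempty hB.nonempty
end

section
/- A finite simple graph is a cograph if and only if it contains no induced subgraph isomorphic to P₄, the path on four vertices. -/
/-- `G` contains an induced path on four vertices. -/
def HasInducedP4 {V : Type*} (G : SimpleGraph V) : Prop :=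
  ∃ v₁ v₂ v₃ v₄ : V, v₁ ≠ v₂ ∧ v₁ ≠ v₃ ∧ v₁ ≠ v₄ ∧ v₂ ≠ v₃ ∧ v₂ ≠ v₄ ∧ v₃ ≠ v₄ ∧
    G.Adj v₁ v₂ ∧ G.Adj v₂ v₃ ∧ G.Adj v₃ v₄ ∧
    ¬ G.Adj v₁ v₃ ∧ ¬ G.Adj v₁ v₄ ∧ ¬ G.Adj v₂ v₄

/-!
A cograph is P₄-free because `P₄` is connected, so an induced `P₄` in a disjoint union lies in one
part, and `P₄` is self-complementary, while a join is a disjoint union in the complement.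

Conversely (Seinsche), if `G` is P₄-free on a finite set `s` with at least two vertices, then `G`
or `Gᶜ` is disconnected on `s`. Suppose both are connected and remove a vertex `v`. If `G - v` is
disconnected, `v` is adjacent to every other vertex: otherwise, on a path in `G - v` from a
non-neighbour of `v` to a neighbour, take the first edge `y z` entering the neighbourhood of `v`,
and a neighbour `w` of `v` in another component of `G - v`; then `y z v w` is an induced `P₄`.
So `v` is isolated in `Gᶜ`, a contradiction; the same holds with `G` and `Gᶜ` exchanged, and
otherwise we induct on `s \ {v}`. Splitting `s` along a component of `G` or of `Gᶜ` then exhibits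
it as a disjoint union or a join of smaller P₄-free sets.
-/

namespace SimpleGraph

variable {V : Type*} (G : SimpleGraph V)

structure IsInducedP4 (a b c d : V) : Prop where
  ne₁₂ : a ≠ b
  ne₁₃ : a ≠ c
  ne₁₄ : a ≠ d
  ne₂₃ : b ≠ c
  ne₂₄ : b ≠ d
  ne₃₄ : c ≠ d
  adj₁₂ : G.Adj a b
  adj₂₃ : G.Adj b c
  adj₃₄ : G.Adj c d
  not_adj₁₃ : ¬ G.Adj a c
  not_adj₁₄ : ¬ G.Adj a d
  not_adj₂₄ : ¬ G.Adj b d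

def HasInducedP4On (s : Set V) : Prop :=
  ∃ a ∈ s, ∃ b ∈ s, ∃ c ∈ s, ∃ d ∈ s, G.IsInducedP4 a b c d

def AdjIn (s : Set V) (x y : V) : Prop :=
  x ∈ s ∧ y ∈ s ∧ G.Adj x y

abbrev ReachableIn (s : Set V) : V → V → Prop :=
  Relation.ReflTransGen (G.AdjIn s)

def PreconnectedOn (s : Set V) : Prop :=
  ∀ x ∈ s, ∀ y ∈ s, G.ReachableIn s x y

variable {G}

theorem IsInducedP4.compl {a b c d : V} (h : Gᶜ.IsInducedP4 a b c d) : G.IsInducedP4 b d a c where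
  ne₁₂ := h.ne₂₄
  ne₁₃ := h.ne₁₂.symm
  ne₁₄ := h.ne₂₃
  ne₂₃ := h.ne₁₄.symm
  ne₂₄ := h.ne₃₄.symm
  ne₃₄ := h.ne₁₃
  adj₁₂ := not_not.1 fun hn => h.not_adj₂₄ ((compl_adj G b d).2 ⟨h.ne₂₄, hn⟩)
  adj₂₃ := not_not.1 fun hn => h.not_adj₁₄ ((compl_adj G a d).2 ⟨h.ne₁₄, fun had => hn had.symm⟩)
  adj₃₄ := not_not.1 fun hn => h.not_adj₁₃ ((compl_adj G a c).2 ⟨h.ne₁₃, hn⟩)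
  not_adj₁₃ := fun hba => ((compl_adj G a b).1 h.adj₁₂).2 hba.symm
  not_adj₁₄ := fun hbc => ((compl_adj G b c).1 h.adj₂₃).2 hbc
  not_adj₂₄ := fun hdc => ((compl_adj G c d).1 h.adj₃₄).2 hdc.symm

theorem hasInducedP4On_compl_iff {s : Set V} : Gᶜ.HasInducedP4On s ↔ G.HasInducedP4On s := by
  have key : ∀ H : SimpleGraph V, Hᶜ.HasInducedP4On s → H.HasInducedP4On s :=
    fun _ ⟨a, ha, b, hb, c, hc, d, hd, h⟩ => ⟨b, hb, d, hd, a, ha, c, hc, h.compl⟩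
  exact ⟨key G, fun h => key Gᶜ (by rwa [compl_compl])⟩

theorem HasInducedP4On.mono {s t : Set V} (hst : s ⊆ t) (h : G.HasInducedP4On s) :
    G.HasInducedP4On t :=
  let ⟨a, ha, b, hb, c, hc, d, hd, h⟩ := h
  ⟨a, hst ha, b, hst hb, c, hst hc, d, hst hd, h⟩

theorem hasInducedP4On_univ_iff : G.HasInducedP4On Set.univ ↔ HasInducedP4 G := by
  constructor
  · rintro ⟨a, -, b, -, c, -, d, -, h₁, h₂, h₃, h₄, h₅, h₆, h₇, h₈, h₉, h₁₀, h₁₁, h₁₂⟩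
    exact ⟨a, b, c, d, h₁, h₂, h₃, h₄, h₅, h₆, h₇, h₈, h₉, h₁₀, h₁₁, h₁₂⟩
  · rintro ⟨a, b, c, d, h₁, h₂, h₃, h₄, h₅, h₆, h₇, h₈, h₉, h₁₀, h₁₁, h₁₂⟩
    exact ⟨a, trivial, b, trivial, c, trivial, d, trivial,
      h₁, h₂, h₃, h₄, h₅, h₆, h₇, h₈, h₉, h₁₀, h₁₁, h₁₂⟩

theorem HasInducedP4On.of_union {A B : Set V} (hAB : ∀ a ∈ A, ∀ b ∈ B, ¬ G.Adj a b)
    (h : G.HasInducedP4On (A ∪ B)) : G.HasInducedP4On A ∨ G.HasInducedP4On B := by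
  obtain ⟨a, ha, b, hb, c, hc, d, hd, h⟩ := h
  have stayA {x y : V} (hxy : G.Adj x y) (hy : y ∈ A ∪ B) (hx : x ∈ A) : y ∈ A :=
    hy.resolve_right fun hyB => hAB x hx y hyB hxy
  have stayB {x y : V} (hxy : G.Adj x y) (hy : y ∈ A ∪ B) (hx : x ∈ B) : y ∈ B :=
    hy.resolve_left fun hyA => hAB y hyA x hx hxy.symm
  rcases ha with ha | ha
  · have hb := stayA h.adj₁₂ hb ha
    have hc := stayA h.adj₂₃ hc hb
    exact .inl ⟨a, ha, b, hb, c, hc, d, stayA h.adj₃₄ hd hc, h⟩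
  · have hb := stayB h.adj₁₂ hb ha
    have hc := stayB h.adj₂₃ hc hb
    exact .inr ⟨a, ha, b, hb, c, hc, d, stayB h.adj₃₄ hd hc, h⟩

theorem AdjIn.symm {s : Set V} {x y : V} (h : G.AdjIn s x y) : G.AdjIn s y x :=
  ⟨h.2.1, h.1, h.2.2.symm⟩

instance (s : Set V) : Std.Symm (G.AdjIn s) :=
  ⟨fun _ _ => AdjIn.symm⟩

theorem ReachableIn.symm {s : Set V} {x y : V} (h : G.ReachableIn s x y) : G.ReachableIn s y x :=
  Std.Symm.symm _ _ h

theorem ReachableIn.exists_boundary_adjIn {s t : Set V} {a b : V} (h : G.ReachableIn s a b)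
    (ha : a ∉ t) (hb : b ∈ t) : ∃ y ∉ t, ∃ z ∈ t, G.ReachableIn (s \ t) a y ∧ G.AdjIn s y z := by
  induction h using Relation.ReflTransGen.head_induction_on with
  | refl => exact absurd hb ha
  | @head a c hac _ ih =>
    by_cases hc : c ∈ t
    · exact ⟨a, ha, c, hc, .refl, hac⟩
    · obtain ⟨y, hy, z, hz, hcy, hyz⟩ := ih hc
      exact ⟨y, hy, z, hz, .head ⟨⟨hac.1, ha⟩, ⟨hac.2.1, hc⟩, hac.2.2⟩ hcy, hyz⟩

theorem exists_not_reachableIn_of_not_preconnectedOn {s : Set V} (h : ¬ G.PreconnectedOn s)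
    (z : V) : ∃ r ∈ s, ¬ G.ReachableIn s z r := by
  simp only [PreconnectedOn, not_forall] at h
  obtain ⟨p, hp, q, hq, hpq⟩ := h
  by_cases hzp : G.ReachableIn s z p
  · exact ⟨q, hq, fun hzq => hpq (hzp.symm.trans hzq)⟩
  · exact ⟨p, hp, hzp⟩

theorem PreconnectedOn.subset_singleton {s : Set V} {v : V} (h : G.PreconnectedOn s) (hv : v ∈ s)
    (hiso : ∀ x ∈ s, ¬ G.Adj v x) : s ⊆ {v} := by
  intro x hx
  obtain hvx | ⟨z, hvz, -⟩ := (h v hv x hx).cases_head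
  · exact hvx.symm
  · exact absurd hvz.2.2 (hiso z hvz.2.1)

theorem adj_of_not_preconnectedOn_diff_singleton {s : Set V} {v x : V}
    (hP4 : ¬ G.HasInducedP4On s) (hG : G.PreconnectedOn s) (hv : v ∈ s)
    (hGv : ¬ G.PreconnectedOn (s \ {v})) (hx : x ∈ s \ {v}) : G.Adj v x := by
  by_contra hvx
  have toNbr : ∀ u ∈ s \ {v}, ∃ w ∈ s \ {v}, G.Adj v w ∧ G.ReachableIn (s \ {v}) u w := by
    intro u hu
    obtain ⟨w, hw, _, rfl, huw, hwv⟩ := (hG u hu.1 v hv).exists_boundary_adjIn hu.2 rfl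
    exact ⟨w, ⟨hwv.1, hw⟩, hwv.2.2.symm, huw⟩
  obtain ⟨w, -, hvw, hxw⟩ := toNbr x hx
  -- `y — z` is where a path from `x` to `w` inside `s \ {v}` enters the neighbourhood of `v`
  obtain ⟨y, hvy, z, hvz, -, hyz⟩ := hxw.exists_boundary_adjIn (t := G.neighborSet v) hvx hvw
  -- a neighbour `w'` of `v` outside the component of `z` in `s \ {v}`
  obtain ⟨r, hr, hzr⟩ := exists_not_reachableIn_of_not_preconnectedOn hGv z
  obtain ⟨w', hw', hvw', hrw'⟩ := toNbr r hr
  have hzw' : ¬ G.ReachableIn (s \ {v}) z w' := fun h => hzr (h.trans hrw'.symm)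
  have hzy : G.ReachableIn (s \ {v}) z y := .single hyz.symm
  refine hP4 ⟨y, hyz.1.1, z, hyz.2.1.1, v, hv, w', hw'.1, ?_⟩
  exact { ne₁₂ := hyz.2.2.ne, ne₁₃ := hyz.1.2, ne₁₄ := fun h => hzw' (h ▸ hzy),
          ne₂₃ := hyz.2.1.2, ne₂₄ := fun h => hzw' (h ▸ .refl), ne₃₄ := fun h => hw'.2 h.symm,
          adj₁₂ := hyz.2.2, adj₂₃ := hvz.symm, adj₃₄ := hvw',
          not_adj₁₃ := fun h => hvy h.symm, not_adj₁₄ := fun h => hzw' (hzy.tail ⟨hyz.1, hw', h⟩),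
          not_adj₂₄ := fun h => hzw' (.single ⟨hyz.2.1, hw', h⟩) }

theorem subset_singleton_of_not_preconnectedOn_diff_singleton {s : Set V} {v : V}
    (hP4 : ¬ G.HasInducedP4On s) (hG : G.PreconnectedOn s) (hGc : Gᶜ.PreconnectedOn s)
    (hv : v ∈ s) (hGv : ¬ G.PreconnectedOn (s \ {v})) : s ⊆ {v} := by
  refine hGc.subset_singleton hv fun x hx hvx => ?_
  obtain ⟨hne, hnadj⟩ := (compl_adj G v x).1 hvx
  exact hnadj (adj_of_not_preconnectedOn_diff_singleton hP4 hG hv hGv ⟨hx, hne.symm⟩)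

theorem subsingleton_of_preconnectedOn_of_compl {s : Set V} (hs : s.Finite)
    (hP4 : ¬ G.HasInducedP4On s) (hG : G.PreconnectedOn s) (hGc : Gᶜ.PreconnectedOn s) :
    s.Subsingleton := by
  induction s, hs using Set.Finite.induction_on with
  | empty => exact Set.subsingleton_empty
  | @insert v t hvt _ ih =>
    refine (Set.subsingleton_singleton (a := v)).anti ?_
    have hdiff : insert v t \ {v} = t := Set.insert_sdiff_self_of_notMem hvt
    have hv : v ∈ insert v t := Set.mem_insert v t
    by_cases htG : G.PreconnectedOn t
    · by_cases htGc : Gᶜ.PreconnectedOn t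
      · have ht := ih (fun h => hP4 (h.mono (Set.subset_insert v t))) htG htGc
        rcases ht.eq_empty_or_singleton with rfl | ⟨w, rfl⟩
        · simp
        · by_cases hvw : G.Adj v w
          · exact hGc.subset_singleton hv (by simp_all)
          · exact hG.subset_singleton hv (by simp_all)
      · exact subset_singleton_of_not_preconnectedOn_diff_singleton (G := Gᶜ)
          (hasInducedP4On_compl_iff.not.2 hP4) hGc (by rwa [compl_compl]) hv (by rwa [hdiff])
    · exact subset_singleton_of_not_preconnectedOn_diff_singleton hP4 hG hGc hv (by rwa [hdiff])

theorem exists_ssubset_of_not_preconnectedOn {s : Set V} (h : ¬ G.PreconnectedOn s) :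
    ∃ A ⊂ s, A.Nonempty ∧ ∀ a ∈ A, ∀ b ∈ s \ A, ¬ G.Adj a b := by
  simp only [PreconnectedOn, not_forall] at h
  obtain ⟨p, hp, q, hq, hpq⟩ := h
  refine ⟨{z ∈ s | G.ReachableIn s p z}, ?_, ⟨p, hp, .refl⟩, ?_⟩
  · exact (Set.ssubset_iff_of_subset fun z hz => hz.1).2 ⟨q, hq, fun h => hpq h.2⟩
  · exact fun a ha b hb hab => hb.2 ⟨hb.1, ha.2.tail ⟨ha.1, hb.1, hab⟩⟩

theorem cographOn_of_not_hasInducedP4On {s : Set V} (hs : s.Finite) (hne : s.Nonempty)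
    (hP4 : ¬ G.HasInducedP4On s) : CographOn G s := by
  induction hn : s.ncard using Nat.strong_induction_on generalizing s with
  | _ n ih =>
  have parts : ∀ A ⊂ s, A.Nonempty → CographOn G A ∧ CographOn G (s \ A) := fun A hA hAne =>
    ⟨ih _ (hn ▸ Set.ncard_lt_ncard hA hs) (hs.subset hA.subset) hAne
      (fun h => hP4 (h.mono hA.subset)) rfl,
     ih _ (hn ▸ Set.ncard_lt_ncard (hA.subset.sdiff_ssubset_of_nonempty hAne) hs) hs.sdiff
      (Set.nonempty_of_ssubset hA) (fun h => hP4 (h.mono Set.sdiff_subset)) rfl⟩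
  by_cases hsub : s.Subsingleton
  · obtain ⟨a, rfl⟩ := hsub.eq_empty_or_singleton.resolve_left hne.ne_empty
    exact .single a
  by_cases hG : G.PreconnectedOn s
  · have hGc : ¬ Gᶜ.PreconnectedOn s := fun hGc =>
      hsub (subsingleton_of_preconnectedOn_of_compl hs hP4 hG hGc)
    obtain ⟨A, hA, hAne, hcross⟩ := exists_ssubset_of_not_preconnectedOn hGc
    rw [← Set.union_sdiff_cancel hA.subset]
    refine .join Set.disjoint_sdiff_right (fun a ha b hb => not_not.1 fun hab => ?_)
      (parts A hA hAne).1 (parts A hA hAne).2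
    exact hcross a ha b hb ((compl_adj G a b).2 ⟨fun h => hb.2 (h ▸ ha), hab⟩)
  · obtain ⟨A, hA, hAne, hcross⟩ := exists_ssubset_of_not_preconnectedOn hG
    rw [← Set.union_sdiff_cancel hA.subset]
    exact .union Set.disjoint_sdiff_right hcross (parts A hA hAne).1 (parts A hA hAne).2

end SimpleGraph

open SimpleGraph

namespace CographOn

variable {V : Type*} {G : SimpleGraph V} {s : Set V}

theorem not_hasInducedP4On (h : CographOn G s) : ¬ G.HasInducedP4On s := by
  induction h with
  | single v =>
    rintro ⟨a, ha, b, hb, _, _, _, _, hP4⟩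
    exact hP4.ne₁₂ (ha.trans hb.symm)
  | union _ hAB _ _ ihA ihB => exact fun h => (h.of_union hAB).elim ihA ihB
  | join _ hAB _ _ ihA ihB =>
    intro h
    rw [← hasInducedP4On_compl_iff] at h ihA ihB
    exact (h.of_union fun a ha b hb hc => ((compl_adj G a b).1 hc).2 (hAB a ha b hb)).elim ihA ihB

end CographOn

/-- A (nonempty) finite simple graph is a cograph if and only if it contains no induced
subgraph isomorphic to `P₄`, the path on four vertices. -/
theorem isCograph_iff_P4_free (V : Type*) [Fintype V] [Nonempty V] (G : SimpleGraph V) :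
    IsCograph G ↔ ¬ HasInducedP4 G := by
  rw [← G.hasInducedP4On_univ_iff]
  exact ⟨CographOn.not_hasInducedP4On,
    G.cographOn_of_not_hasInducedP4On Set.finite_univ Set.univ_nonempty⟩
end

section
/- There exists a constant c > 0 such that for infinitely many n, the number of simple graphs on the labeled vertex set {1,…,n} containing no cycle of length 4 as a subgraph is at least 2^{c·n^{3/2}}. -/
/-!
Over a finite commutative domain `F` with `q` elements, join `(a, b)` and `(c, d)` in `F × F`
when `b + d = a c`. The neighbours of `(a, b)` lie on the line `y = a x - b`, and two distinct
such lines meet in at most one point, so no two vertices have two common neighbours and the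
graph is `C₄`-free. Each of its `q²` vertices has degree at least `q - 1`, so it has about
`q³ / 2` edges, and each of its `2 ^ (q³ / 2)` spanning subgraphs is again `C₄`-free.
Taking `q = p` prime gives `n = p²` vertices and `2 ^ (n ^ (3/2) / 4)` `C₄`-free graphs.
-/

/-- `G` contains no cycle of length 4 as a subgraph. -/
def C4Free {V : Type*} (G : SimpleGraph V) : Prop :=
  ¬ ∃ u v w x : V, u ≠ v ∧ u ≠ w ∧ u ≠ x ∧ v ≠ w ∧ v ≠ x ∧ w ≠ x ∧
    G.Adj u v ∧ G.Adj v w ∧ G.Adj w x ∧ G.Adj x u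

open Finset SimpleGraph

theorem C4Free.of_injective_hom {V W : Type*} {G : SimpleGraph V} {H : SimpleGraph W}
    (f : G →g H) (hf : Function.Injective f) (hH : C4Free H) : C4Free G := by
  rintro ⟨u, v, w, x, huv, huw, hux, hvw, hvx, hwx, huv', hvw', hwx', hxu'⟩
  exact hH ⟨f u, f v, f w, f x, hf.ne huv, hf.ne huw, hf.ne hux, hf.ne hvw, hf.ne hvx,
    hf.ne hwx, f.map_adj huv', f.map_adj hvw', f.map_adj hwx', f.map_adj hxu'⟩

theorem C4Free.anti {V : Type*} {G H : SimpleGraph V} (hGH : G ≤ H) (hH : C4Free H) :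
    C4Free G :=
  hH.of_injective_hom (Hom.ofLE hGH) Function.injective_id

theorem C4Free.of_commonNeighbors_subsingleton {V : Type*} {G : SimpleGraph V}
    (h : ∀ u w, u ≠ w → (G.commonNeighbors u w).Subsingleton) : C4Free G := by
  rintro ⟨u, v, w, x, -, huw, -, -, hvx, -, huv, hvw, hwx, hxu⟩
  exact hvx <| h u w huw ⟨huv, hvw.symm⟩ ⟨hxu.symm, hwx⟩

theorem SimpleGraph.edgeSet_fromEdgeSet_of_subset {V : Type*} {G : SimpleGraph V}
    {s : Set (Sym2 V)} (hs : s ⊆ G.edgeSet) : (fromEdgeSet s).edgeSet = s := by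
  rw [edgeSet_fromEdgeSet, sdiff_eq_left, Set.disjoint_left]
  exact fun e he => G.not_isDiag_of_mem_edgeSet (hs he)

theorem two_pow_card_edgeFinset_le_ncard {V : Type*} [Fintype V] {P : SimpleGraph V → Prop}
    (H : SimpleGraph V) [Fintype H.edgeSet] (hP : ∀ G ≤ H, P G) :
    2 ^ #H.edgeFinset ≤ {G | P G}.ncard := by
  rw [← Set.ncard_coe_finset, coe_edgeFinset, ← Set.ncard_powerset]
  refine Set.ncard_le_ncard_of_injOn fromEdgeSet (fun s hs => hP _ ?_) ?_
  · simpa only [fromEdgeSet_edgeSet] using fromEdgeSet_mono (t := H.edgeSet) hs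
  · intro s hs t ht hst
    rw [← edgeSet_fromEdgeSet_of_subset hs, ← edgeSet_fromEdgeSet_of_subset ht, hst]

def affinePolarityGraph (F : Type*) [CommRing F] : SimpleGraph (F × F) where
  Adj x y := x ≠ y ∧ x.2 + y.2 = x.1 * y.1
  symm := ⟨fun _ _ h => ⟨h.1.symm, by rw [add_comm, mul_comm]; exact h.2⟩⟩
  loopless := ⟨fun _ h => h.1 rfl⟩

namespace affinePolarityGraph

variable {F : Type*} [CommRing F]

theorem adj_iff {x y : F × F} :
    (affinePolarityGraph F).Adj x y ↔ x ≠ y ∧ x.2 + y.2 = x.1 * y.1 :=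
  Iff.rfl

instance [DecidableEq F] : DecidableRel (affinePolarityGraph F).Adj :=
  fun _ _ => decidable_of_iff' _ adj_iff

theorem commonNeighbors_subsingleton [IsDomain F] {u w : F × F} (huw : u ≠ w) :
    ((affinePolarityGraph F).commonNeighbors u w).Subsingleton := by
  intro v hv x hx
  simp only [mem_commonNeighbors, adj_iff] at hv hx
  obtain ⟨⟨-, huv⟩, -, hwv⟩ := hv
  obtain ⟨⟨-, hux⟩, -, hwx⟩ := hx
  have hv : u.2 - w.2 = (u.1 - w.1) * v.1 := by linear_combination huv - hwv
  have hx : u.2 - w.2 = (u.1 - w.1) * x.1 := by linear_combination hux - hwx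
  by_cases h₁ : u.1 = w.1
  · refine absurd (Prod.ext h₁ ?_) huw
    rw [h₁, sub_self, zero_mul, sub_eq_zero] at hv
    exact hv
  · have hvx₁ : v.1 = x.1 := mul_left_cancel₀ (sub_ne_zero_of_ne h₁) (hv.symm.trans hx)
    exact Prod.ext hvx₁ (by linear_combination huv - hux + u.1 * hvx₁)

theorem c4Free [IsDomain F] : C4Free (affinePolarityGraph F) :=
  C4Free.of_commonNeighbors_subsingleton fun _ _ => commonNeighbors_subsingleton

variable [Fintype F] [DecidableEq F]

theorem card_le_degree_add_one (v : F × F) :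
    Fintype.card F ≤ (affinePolarityGraph F).degree v + 1 := by
  let line : F ↪ F × F := ⟨fun c => (c, v.1 * c - v.2), fun _ _ h => congrArg Prod.fst h⟩
  have hline : univ.map line ⊆ insert v ((affinePolarityGraph F).neighborFinset v) := by
    rintro x hx
    obtain ⟨c, -, rfl⟩ := mem_map.1 hx
    rw [mem_insert, mem_neighborFinset]
    by_cases hv : v = line c
    · exact Or.inl hv.symm
    · exact Or.inr (adj_iff.2 ⟨hv, show v.2 + (v.1 * c - v.2) = v.1 * c by ring⟩)
  calc Fintype.card F = #(univ.map line) := by rw [card_map, card_univ]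
    _ ≤ #(insert v ((affinePolarityGraph F).neighborFinset v)) := card_le_card hline
    _ ≤ (affinePolarityGraph F).degree v + 1 := by
      rw [← card_neighborFinset_eq_degree]; exact card_insert_le _ _

theorem card_pow_three_le :
    Fintype.card F ^ 3 ≤ 2 * #(affinePolarityGraph F).edgeFinset + Fintype.card F ^ 2 := by
  calc Fintype.card F ^ 3 = ∑ _v : F × F, Fintype.card F := by
        rw [sum_const, card_univ, Fintype.card_prod, smul_eq_mul]; ring
    _ ≤ ∑ v : F × F, ((affinePolarityGraph F).degree v + 1) :=
        sum_le_sum fun v _ => card_le_degree_add_one v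
    _ = 2 * #(affinePolarityGraph F).edgeFinset + Fintype.card F ^ 2 := by
        rw [sum_add_distrib, sum_degrees_eq_twice_card_edges, sum_const, card_univ,
          Fintype.card_prod, smul_eq_mul, mul_one, sq]

end affinePolarityGraph

theorem two_rpow_le_ncard_c4Free {V F : Type*} [Fintype V] [CommRing F] [IsDomain F] [Fintype F]
    (hV : Fintype.card V = Fintype.card F ^ 2) :
    (2 : ℝ) ^ (((Fintype.card F : ℝ) ^ 3 - (Fintype.card F : ℝ) ^ 2) / 2) ≤
      ({G : SimpleGraph V | C4Free G}.ncard : ℝ) := by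
  classical
  let e : V ≃ F × F := Fintype.equivOfCardEq (by rw [hV, Fintype.card_prod, sq])
  let H := (affinePolarityGraph F).comap e
  have hH : C4Free H := affinePolarityGraph.c4Free.of_injective_hom
    (Iso.comap e _).toHom (Iso.comap e _).injective
  have hE : Fintype.card F ^ 3 ≤ 2 * #H.edgeFinset + Fintype.card F ^ 2 :=
    (Iso.comap e (affinePolarityGraph F)).card_edgeFinset_eq ▸
      affinePolarityGraph.card_pow_three_le
  have hE' : ((Fintype.card F : ℝ) ^ 3 - (Fintype.card F : ℝ) ^ 2) / 2 ≤ #H.edgeFinset := by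
    have := (Nat.cast_le (α := ℝ)).2 hE
    push_cast at this
    linarith
  calc (2 : ℝ) ^ (((Fintype.card F : ℝ) ^ 3 - (Fintype.card F : ℝ) ^ 2) / 2)
      ≤ (2 : ℝ) ^ (#H.edgeFinset : ℝ) := Real.rpow_le_rpow_of_exponent_le one_le_two hE'
    _ = ((2 ^ #H.edgeFinset : ℕ) : ℝ) := by rw [Real.rpow_natCast]; push_cast; rfl
    _ ≤ _ := by exact_mod_cast two_pow_card_edgeFinset_le_ncard H fun G hG => hH.anti hG

/-- There is a constant `c > 0` such that for infinitely many `n`, the number of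
`C₄`-free graphs on the labeled vertex set `{1,…,n}` is at least `2^(c·n^(3/2))`. -/
theorem many_C4_free_graphs :
    ∃ c : ℝ, 0 < c ∧ ∀ N : ℕ, ∃ n : ℕ, N ≤ n ∧
      (2 : ℝ) ^ (c * (n : ℝ) ^ ((3 : ℝ) / 2)) ≤
        (({G : SimpleGraph (Fin n) | C4Free G}).ncard : ℝ) := by
  refine ⟨1 / 4, by norm_num, fun N => ?_⟩
  obtain ⟨p, hNp, hp⟩ := Nat.exists_infinite_primes (max N 2)
  have : Fact p.Prime := ⟨hp⟩
  refine ⟨p ^ 2, (le_max_left N 2).trans (hNp.trans (Nat.le_self_pow two_ne_zero p)), ?_⟩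
  have hcount := two_rpow_le_ncard_c4Free (V := Fin (p ^ 2)) (F := ZMod p)
    (by rw [Fintype.card_fin, ZMod.card])
  rw [ZMod.card] at hcount
  refine le_trans (Real.rpow_le_rpow_of_exponent_le one_le_two ?_) hcount
  have hp2 : (2 : ℝ) ≤ p := by exact_mod_cast (le_max_right N 2).trans hNp
  rw [Nat.cast_pow, ← Real.rpow_natCast, ← Real.rpow_mul (Nat.cast_nonneg p)]
  norm_num
  nlinarith [sq_nonneg (p : ℝ)]
end

section
/- Let G₁ and G₂ be vertex-disjoint k-colored graphs and S ⊆ {1,…,k}×{1,…,k}. Then h₃(G₁ ⋈_S G₂) equals the set of triples (y₁ ∨ z₁, y₂ ∨ z₂, y₃ ∨ z₃) (where ∨ denotes bitwise OR of vectors in {0,1}^k) ranging over all (y₁,y₂,y₃) ∈ h₃(G₁) and (z₁,z₂,z₃) ∈ h₃(G₂) such that there exist no pair (p,q) ∈ S and index j ∈ {1,2,3} with y_j[p] = 1 and z_j[q] = 1. -/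
/-- `h3 G c` is the homomorphism class of the `k`-colored graph `(G, c)` for
non-3-colorability: the set of triples `(b₁, b₂, b₃)` of boolean vectors of length `k`
encoding, for some partition of the vertex set into three independent sets
`(X₁, X₂, X₃)`, which colors appear in each part. -/
def h3 {V : Type*} {k : ℕ} (G : SimpleGraph V) (c : V → Fin k) :
    Set ((Fin k → Bool) × (Fin k → Bool) × (Fin k → Bool)) :=
  { b | ∃ X₁ X₂ X₃ : Set V,
      X₁ ∪ X₂ ∪ X₃ = Set.univ ∧
      Disjoint X₁ X₂ ∧ Disjoint X₁ X₃ ∧ Disjoint X₂ X₃ ∧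
      (∀ u ∈ X₁, ∀ v ∈ X₁, ¬ G.Adj u v) ∧
      (∀ u ∈ X₂, ∀ v ∈ X₂, ¬ G.Adj u v) ∧
      (∀ u ∈ X₃, ∀ v ∈ X₃, ¬ G.Adj u v) ∧
      (∀ i, b.1 i = true ↔ ∃ v ∈ X₁, c v = i) ∧
      (∀ i, b.2.1 i = true ↔ ∃ v ∈ X₂, c v = i) ∧
      (∀ i, b.2.2 i = true ↔ ∃ v ∈ X₃, c v = i) }

/-!
A vertex set `X` of `G₁ ⋈_S G₂` is the same as the pair of its traces `A = inl⁻¹ X` and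
`B = inr⁻¹ X`. `X` is independent iff `A` and `B` are independent and no pair of `S` joins a
color occurring in `A` to a color occurring in `B`, and the colors occurring in `X` are those of
`A` together with those of `B`. Likewise a triple of sets partitions the sum iff both traces
partition the summands, so independent 3-partitions of the join are exactly the pairs of
independent 3-partitions of `G₁` and `G₂` that are compatible part by part.
-/

namespace H3Join

variable {V W : Type*} {k : ℕ}

def IsIndep3Partition (G : SimpleGraph V) (X₁ X₂ X₃ : Set V) : Prop :=
  X₁ ∪ X₂ ∪ X₃ = Set.univ ∧
    Disjoint X₁ X₂ ∧ Disjoint X₁ X₃ ∧ Disjoint X₂ X₃ ∧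
    (∀ u ∈ X₁, ∀ v ∈ X₁, ¬ G.Adj u v) ∧
    (∀ u ∈ X₂, ∀ v ∈ X₂, ¬ G.Adj u v) ∧
    (∀ u ∈ X₃, ∀ v ∈ X₃, ¬ G.Adj u v)

open Classical in
noncomputable def colorIndicator (c : V → Fin k) (X : Set V) : Fin k → Bool :=
  fun i => decide (i ∈ c '' X)

@[simp]
theorem colorIndicator_eq_true {c : V → Fin k} {X : Set V} {i : Fin k} :
    colorIndicator c X i = true ↔ ∃ v ∈ X, c v = i := by
  simp [colorIndicator]

theorem forall_eq_true_iff_eq_colorIndicator {c : V → Fin k} {X : Set V} {b : Fin k → Bool} :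
    (∀ i, b i = true ↔ ∃ v ∈ X, c v = i) ↔ b = colorIndicator c X := by
  constructor
  · intro h
    ext i
    rw [Bool.eq_iff_iff, h, colorIndicator_eq_true]
  · rintro rfl i
    exact colorIndicator_eq_true

theorem mem_h3_iff {G : SimpleGraph V} {c : V → Fin k}
    {b : (Fin k → Bool) × (Fin k → Bool) × (Fin k → Bool)} :
    b ∈ h3 G c ↔ ∃ X₁ X₂ X₃, IsIndep3Partition G X₁ X₂ X₃ ∧
      b = (colorIndicator c X₁, colorIndicator c X₂, colorIndicator c X₃) := by
  obtain ⟨b₁, b₂, b₃⟩ := b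
  simp only [h3, IsIndep3Partition, Set.mem_ofPred_eq, forall_eq_true_iff_eq_colorIndicator,
    Prod.mk.injEq, and_assoc]

theorem colorIndicator_sumElim (c₁ : V → Fin k) (c₂ : W → Fin k) (X : Set (V ⊕ W)) :
    colorIndicator (Sum.elim c₁ c₂) X =
      fun i => colorIndicator c₁ (Sum.inl ⁻¹' X) i || colorIndicator c₂ (Sum.inr ⁻¹' X) i := by
  ext i
  rw [Bool.eq_iff_iff]
  simp [Sum.exists]

theorem disjoint_iff_preimage_inl_inr {X Y : Set (V ⊕ W)} :
    Disjoint X Y ↔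
      Disjoint (Sum.inl ⁻¹' X) (Sum.inl ⁻¹' Y) ∧ Disjoint (Sum.inr ⁻¹' X) (Sum.inr ⁻¹' Y) := by
  simp only [Set.disjoint_left, Sum.forall, Set.mem_preimage]

theorem eq_univ_iff_preimage_inl_inr {X : Set (V ⊕ W)} :
    X = Set.univ ↔ Sum.inl ⁻¹' X = Set.univ ∧ Sum.inr ⁻¹' X = Set.univ := by
  simp only [Set.eq_univ_iff_forall, Sum.forall, Set.mem_preimage]

def Compatible (S : Set (Fin k × Fin k)) (y z : Fin k → Bool) : Prop :=
  ∀ p q, (p, q) ∈ S → ¬ (y p = true ∧ z q = true)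

section Join

variable (G₁ : SimpleGraph V) (G₂ : SimpleGraph W) (c₁ : V → Fin k) (c₂ : W → Fin k)
  (S : Set (Fin k × Fin k))

@[simp]
theorem joinGraph_adj_inl_inl {a a' : V} :
    (joinGraph G₁ G₂ c₁ c₂ S).Adj (Sum.inl a) (Sum.inl a') ↔ G₁.Adj a a' := Iff.rfl

@[simp]
theorem joinGraph_adj_inr_inr {b b' : W} :
    (joinGraph G₁ G₂ c₁ c₂ S).Adj (Sum.inr b) (Sum.inr b') ↔ G₂.Adj b b' := Iff.rfl

@[simp]
theorem joinGraph_adj_inl_inr {a : V} {b : W} :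
    (joinGraph G₁ G₂ c₁ c₂ S).Adj (Sum.inl a) (Sum.inr b) ↔ (c₁ a, c₂ b) ∈ S := Iff.rfl

@[simp]
theorem joinGraph_adj_inr_inl {a : V} {b : W} :
    (joinGraph G₁ G₂ c₁ c₂ S).Adj (Sum.inr b) (Sum.inl a) ↔ (c₁ a, c₂ b) ∈ S := Iff.rfl

theorem joinGraph_independent_iff (X : Set (V ⊕ W)) :
    (∀ u ∈ X, ∀ v ∈ X, ¬ (joinGraph G₁ G₂ c₁ c₂ S).Adj u v) ↔
      (∀ u ∈ Sum.inl ⁻¹' X, ∀ v ∈ Sum.inl ⁻¹' X, ¬ G₁.Adj u v) ∧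
      (∀ u ∈ Sum.inr ⁻¹' X, ∀ v ∈ Sum.inr ⁻¹' X, ¬ G₂.Adj u v) ∧
      Compatible S (colorIndicator c₁ (Sum.inl ⁻¹' X)) (colorIndicator c₂ (Sum.inr ⁻¹' X)) := by
  simp only [Compatible, Sum.forall, colorIndicator_eq_true, Set.mem_preimage,
    joinGraph_adj_inl_inl, joinGraph_adj_inr_inr, joinGraph_adj_inl_inr, joinGraph_adj_inr_inl]
  grind

theorem isIndep3Partition_joinGraph_iff {X₁ X₂ X₃ : Set (V ⊕ W)} :
    IsIndep3Partition (joinGraph G₁ G₂ c₁ c₂ S) X₁ X₂ X₃ ↔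
      IsIndep3Partition G₁ (Sum.inl ⁻¹' X₁) (Sum.inl ⁻¹' X₂) (Sum.inl ⁻¹' X₃) ∧
      IsIndep3Partition G₂ (Sum.inr ⁻¹' X₁) (Sum.inr ⁻¹' X₂) (Sum.inr ⁻¹' X₃) ∧
      Compatible S (colorIndicator c₁ (Sum.inl ⁻¹' X₁)) (colorIndicator c₂ (Sum.inr ⁻¹' X₁)) ∧
      Compatible S (colorIndicator c₁ (Sum.inl ⁻¹' X₂)) (colorIndicator c₂ (Sum.inr ⁻¹' X₂)) ∧
      Compatible S (colorIndicator c₁ (Sum.inl ⁻¹' X₃)) (colorIndicator c₂ (Sum.inr ⁻¹' X₃)) := by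
  simp only [IsIndep3Partition, eq_univ_iff_preimage_inl_inr, disjoint_iff_preimage_inl_inr,
    joinGraph_independent_iff, Set.preimage_union]
  tauto

end Join

theorem not_exists_incompatible_iff {S : Set (Fin k × Fin k)}
    {y z : (Fin k → Bool) × (Fin k → Bool) × (Fin k → Bool)} :
    (¬ ∃ p q, (p, q) ∈ S ∧
        ((y.1 p = true ∧ z.1 q = true) ∨ (y.2.1 p = true ∧ z.2.1 q = true) ∨
          (y.2.2 p = true ∧ z.2.2 q = true))) ↔
      Compatible S y.1 z.1 ∧ Compatible S y.2.1 z.2.1 ∧ Compatible S y.2.2 z.2.2 := by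
  simp only [Compatible, not_exists, not_and, not_or, imp_and, forall_and]

end H3Join

open H3Join in
theorem h3_joinGraph_general {k : ℕ} {α β : Type*}
    (G₁ : SimpleGraph α) (G₂ : SimpleGraph β) (c₁ : α → Fin k) (c₂ : β → Fin k)
    (S : Set (Fin k × Fin k)) :
    h3 (joinGraph G₁ G₂ c₁ c₂ S) (Sum.elim c₁ c₂) =
      { b | ∃ y ∈ h3 G₁ c₁, ∃ z ∈ h3 G₂ c₂,
          (¬ ∃ p q, (p, q) ∈ S ∧
            ((y.1 p = true ∧ z.1 q = true) ∨ (y.2.1 p = true ∧ z.2.1 q = true) ∨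
              (y.2.2 p = true ∧ z.2.2 q = true))) ∧
          b = (fun i => y.1 i || z.1 i, fun i => y.2.1 i || z.2.1 i,
                fun i => y.2.2 i || z.2.2 i) } := by
  ext b
  simp only [Set.mem_ofPred_eq, mem_h3_iff, not_exists_incompatible_iff]
  constructor
  · rintro ⟨X₁, X₂, X₃, hX, rfl⟩
    obtain ⟨hA, hB, hcompat⟩ := (isIndep3Partition_joinGraph_iff G₁ G₂ c₁ c₂ S).1 hX
    exact ⟨_, ⟨_, _, _, hA, rfl⟩, _, ⟨_, _, _, hB, rfl⟩, hcompat,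
      by simp only [colorIndicator_sumElim]⟩
  · rintro ⟨_, ⟨A₁, A₂, A₃, hA, rfl⟩, _, ⟨B₁, B₂, B₃, hB, rfl⟩, hcompat, rfl⟩
    have hinl (A : Set α) (B : Set β) : Sum.inl ⁻¹' Set.sumEquiv.symm (A, B) = A :=
      congrArg Prod.fst (Set.sumEquiv.apply_symm_apply (A, B))
    have hinr (A : Set α) (B : Set β) : Sum.inr ⁻¹' Set.sumEquiv.symm (A, B) = B :=
      congrArg Prod.snd (Set.sumEquiv.apply_symm_apply (A, B))
    refine ⟨Set.sumEquiv.symm (A₁, B₁), Set.sumEquiv.symm (A₂, B₂), Set.sumEquiv.symm (A₃, B₃),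
      (isIndep3Partition_joinGraph_iff G₁ G₂ c₁ c₂ S).2 ?_, ?_⟩
    · simpa only [hinl, hinr] using ⟨hA, hB, hcompat⟩
    · simp only [colorIndicator_sumElim, hinl, hinr]

/-- The homomorphism class of a join `G₁ ⋈_S G₂` is obtained from the classes of `G₁`
and `G₂`: it consists of the componentwise bitwise ORs `(y₁ ∨ z₁, y₂ ∨ z₂, y₃ ∨ z₃)` of
triples `y ∈ h3 G₁` and `z ∈ h3 G₂` that are compatible, i.e., such that no pair
`(p,q) ∈ S` and index `j` satisfy `y_j[p] = 1` and `z_j[q] = 1`. -/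
theorem h3_joinGraph {k : ℕ} {α β : Type*} [Fintype α] [Fintype β]
    (G₁ : SimpleGraph α) (G₂ : SimpleGraph β) (c₁ : α → Fin k) (c₂ : β → Fin k)
    (S : Set (Fin k × Fin k)) :
    h3 (joinGraph G₁ G₂ c₁ c₂ S) (Sum.elim c₁ c₂) =
      { b | ∃ y ∈ h3 G₁ c₁, ∃ z ∈ h3 G₂ c₂,
          (¬ ∃ p q, (p, q) ∈ S ∧
            ((y.1 p = true ∧ z.1 q = true) ∨ (y.2.1 p = true ∧ z.2.1 q = true) ∨
              (y.2.2 p = true ∧ z.2.2 q = true))) ∧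
          b = (fun i => y.1 i || z.1 i, fun i => y.2.1 i || z.2.1 i,
                fun i => y.2.2 i || z.2.2 i) } :=
  h3_joinGraph_general G₁ G₂ c₁ c₂ S
end

section
/- Let G be a k-colored graph and R : {1,…,k} → {1,…,k} a recoloring. Then h₃(recolor_R(G)) = { (R̂(b₁), R̂(b₂), R̂(b₃)) : (b₁,b₂,b₃) ∈ h₃(G) }, where for a vector b ∈ {0,1}^k the vector R̂(b) ∈ {0,1}^k is defined by R̂(b)[q] = 1 if and only if there exists p ∈ {1,…,k} with R(p) = q and b[p] = 1. -/
/-- For a recoloring `R` and a boolean vector `b` of length `k`, `Rhat R b` is the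
boolean vector with `Rhat R b [q] = 1` iff there is `p` with `R p = q` and `b[p] = 1`. -/
def Rhat {k : ℕ} (R : Fin k → Fin k) (b : Fin k → Bool) : Fin k → Bool :=
  fun q => decide (∃ p, R p = q ∧ b p = true)

/-! A triple in `h3 G c` is the triple of color vectors of the parts of a partition into
independent sets, and the colors used on a part under `R ∘ c` are the `R`-images of those used
under `c`. Hence both sides are images of the same set of partitions. -/

open Classical in
noncomputable def colorVector {V α : Type*} (c : V → α) (X : Set V) : α → Bool :=
  fun i => decide (i ∈ c '' X)

section

variable {V α : Type*}

theorem eq_colorVector_iff {c : V → α} {X : Set V} {b : α → Bool} :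
    b = colorVector c X ↔ ∀ i, b i = true ↔ ∃ v ∈ X, c v = i := by
  refine funext_iff.trans (forall_congr' fun i => ?_)
  rw [Bool.eq_iff_iff]
  simp only [colorVector, decide_eq_true_eq, Set.mem_image]

theorem Rhat_colorVector {k : ℕ} (R : Fin k → Fin k) (c : V → Fin k) (X : Set V) :
    Rhat R (colorVector c X) = colorVector (R ∘ c) X := by
  ext q
  rw [Bool.eq_iff_iff, Rhat, decide_eq_true_iff]
  simp only [colorVector, decide_eq_true_iff, Set.image_comp, Set.mem_image]
  exact exists_congr fun p => and_comm

def indepPartitions3 (G : SimpleGraph V) : Set (Set V × Set V × Set V) :=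
  { X | X.1 ∪ X.2.1 ∪ X.2.2 = Set.univ ∧
      Disjoint X.1 X.2.1 ∧ Disjoint X.1 X.2.2 ∧ Disjoint X.2.1 X.2.2 ∧
      (∀ u ∈ X.1, ∀ v ∈ X.1, ¬ G.Adj u v) ∧
      (∀ u ∈ X.2.1, ∀ v ∈ X.2.1, ¬ G.Adj u v) ∧
      (∀ u ∈ X.2.2, ∀ v ∈ X.2.2, ¬ G.Adj u v) }

theorem h3_eq_image {k : ℕ} (G : SimpleGraph V) (c : V → Fin k) :
    h3 G c = (fun X => (colorVector c X.1, colorVector c X.2.1, colorVector c X.2.2)) ''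
      indepPartitions3 G := by
  ext ⟨b₁, b₂, b₃⟩
  simp only [h3, indepPartitions3, Set.mem_ofPred_eq, Set.mem_image, Prod.exists, Prod.mk.injEq,
    eq_comm (b := b₁), eq_comm (b := b₂), eq_comm (b := b₃), eq_colorVector_iff, and_assoc]

end

theorem h3_recolor_general {k : ℕ} {V : Type*}
    (G : SimpleGraph V) (c : V → Fin k) (R : Fin k → Fin k) :
    h3 G (R ∘ c) =
      (fun b : (Fin k → Bool) × (Fin k → Bool) × (Fin k → Bool) =>
        (Rhat R b.1, Rhat R b.2.1, Rhat R b.2.2)) '' h3 G c := by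
  simp only [h3_eq_image, Set.image_image, Rhat_colorVector]

/-- The homomorphism class of a recolored graph `recolor_R(G)` is the image of the class
of `G` under the componentwise application of `Rhat R`. -/
theorem h3_recolor {k : ℕ} {V : Type*} [Fintype V]
    (G : SimpleGraph V) (c : V → Fin k) (R : Fin k → Fin k) :
    h3 G (R ∘ c) =
      (fun b : (Fin k → Bool) × (Fin k → Bool) × (Fin k → Bool) =>
        (Rhat R b.1, Rhat R b.2.1, Rhat R b.2.2)) '' h3 G c :=
  h3_recolor_general G c R
end

section
/- Let G₁ and G₂ be vertex-disjoint k-colored graphs, S ⊆ {1,…,k}×{1,…,k}, G = G₁ ⋈_S G₂, and let w assign an integer weight to every vertex of G. For a k-colored graph H (among G, G₁, G₂) and a set of colors c ⊆ {1,…,k}, let MaxW(H,c) ∈ ℤ ∪ {−∞} be the maximum of Σ_{x∈X} w(x) over all independent sets X of H whose set of colors is exactly c, with MaxW(H,c) = −∞ if no such X exists. Then for every c ⊆ {1,…,k}: MaxW(G,c) equals the maximum, over all pairs (c₁,c₂) of subsets of {1,…,k} satisfying c₁ ∪ c₂ = c and such that there is no pair (p,q) ∈ S with p ∈ c₁ and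 q ∈ c₂, of MaxW(G₁,c₁) + MaxW(G₂,c₂) (with the conventions that the maximum over an empty collection is −∞ and that (−∞) + m = −∞ for every m). -/
/-- `MaxW G col w s` is the maximum total weight of an independent set of `G` whose set
of colors is exactly `s`, and `⊥` (i.e. `-∞`) if there is no such independent set. -/
noncomputable def MaxW {V : Type*} [Fintype V] {k : ℕ} (G : SimpleGraph V)
    (col : V → Fin k) (w : V → ℤ) (s : Finset (Fin k)) : WithBot ℤ := by
  classical
  exact ((Finset.univ : Finset (Finset V)).filter
      (fun X => (∀ u ∈ X, ∀ v ∈ X, ¬ G.Adj u v) ∧ X.image col = s)).sup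
    (fun X => ((∑ v ∈ X, w v : ℤ) : WithBot ℤ))

/-- The maximum over all pairs `(c₁, c₂)` of color sets with `c₁ ∪ c₂ = s` and not
creating any `S`-edge, of `MaxW G₁ c₁ + MaxW G₂ c₂`. -/
noncomputable def joinMaxRHS {k : ℕ} {α β : Type*} [Fintype α] [Fintype β]
    (G₁ : SimpleGraph α) (G₂ : SimpleGraph β) (c₁ : α → Fin k) (c₂ : β → Fin k)
    (S : Set (Fin k × Fin k)) (w : α ⊕ β → ℤ) (s : Finset (Fin k)) : WithBot ℤ := by
  classical
  exact ((Finset.univ : Finset (Finset (Fin k) × Finset (Fin k))).filter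
      (fun p => p.1 ∪ p.2 = s ∧ ¬ ∃ q ∈ S, q.1 ∈ p.1 ∧ q.2 ∈ p.2)).sup
    (fun p => MaxW G₁ c₁ (fun a => w (Sum.inl a)) p.1 +
      MaxW G₂ c₂ (fun b => w (Sum.inr b)) p.2)

/-!
An independent set of `G₁ ⋈_S G₂` is exactly the disjoint union of an independent set `A` of
`G₁` and an independent set `B` of `G₂` such that no pair of `S` joins a color of `A` to a
color of `B`; its color set is the union of theirs and its weight the sum of theirs.
So the maximization over independent sets of the join splits into the two maximizations.
-/

lemma Finset.image_disjSum_elim {α β γ : Type*} [DecidableEq γ] (A : Finset α) (B : Finset β)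
    (f : α → γ) (g : β → γ) :
    (A.disjSum B).image (Sum.elim f g) = A.image f ∪ B.image g := by
  ext
  simp only [Finset.mem_image, Finset.mem_union, Finset.mem_disjSum]
  aesop

section MaxW

variable {V : Type*} [Fintype V] {k : ℕ} {G : SimpleGraph V} {col : V → Fin k} {w : V → ℤ}
  {s : Finset (Fin k)}

lemma le_MaxW {X : Finset V} (hX : ∀ u ∈ X, ∀ v ∈ X, ¬ G.Adj u v) (hXs : X.image col = s) :
    ((∑ v ∈ X, w v : ℤ) : WithBot ℤ) ≤ MaxW G col w s := by
  classical
  exact Finset.le_sup (f := fun X : Finset V => ((∑ v ∈ X, w v : ℤ) : WithBot ℤ))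
    (Finset.mem_filter.mpr ⟨Finset.mem_univ X, hX, hXs⟩)

lemma MaxW_le {M : WithBot ℤ}
    (h : ∀ X : Finset V, (∀ u ∈ X, ∀ v ∈ X, ¬ G.Adj u v) → X.image col = s →
      ((∑ v ∈ X, w v : ℤ) : WithBot ℤ) ≤ M) :
    MaxW G col w s ≤ M := by
  classical
  exact Finset.sup_le fun X hX => h X (Finset.mem_filter.mp hX).2.1 (Finset.mem_filter.mp hX).2.2

lemma MaxW_eq_bot_or_exists (G : SimpleGraph V) (col : V → Fin k) (w : V → ℤ)
    (s : Finset (Fin k)) :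
    MaxW G col w s = ⊥ ∨ ∃ X : Finset V, (∀ u ∈ X, ∀ v ∈ X, ¬ G.Adj u v) ∧
      X.image col = s ∧ MaxW G col w s = ((∑ v ∈ X, w v : ℤ) : WithBot ℤ) := by
  classical
  unfold MaxW
  set F := (Finset.univ : Finset (Finset V)).filter
    (fun X => (∀ u ∈ X, ∀ v ∈ X, ¬ G.Adj u v) ∧ X.image col = s)
  rcases F.eq_empty_or_nonempty with hF | hF
  · exact Or.inl (by rw [hF, Finset.sup_empty])
  · obtain ⟨X, hXF, hXsup⟩ := Finset.exists_mem_eq_sup F hF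
      (fun X : Finset V => ((∑ v ∈ X, w v : ℤ) : WithBot ℤ))
    exact Or.inr ⟨X, (Finset.mem_filter.mp hXF).2.1, (Finset.mem_filter.mp hXF).2.2, hXsup⟩

end MaxW

lemma MaxW_add_MaxW_le {V W : Type*} [Fintype V] [Fintype W] {k : ℕ}
    {G : SimpleGraph V} {H : SimpleGraph W} {colG : V → Fin k} {colH : W → Fin k}
    {wG : V → ℤ} {wH : W → ℤ} {s t : Finset (Fin k)} {M : WithBot ℤ}
    (h : ∀ (A : Finset V) (B : Finset W), (∀ u ∈ A, ∀ v ∈ A, ¬ G.Adj u v) →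
      (∀ u ∈ B, ∀ v ∈ B, ¬ H.Adj u v) → A.image colG = s → B.image colH = t →
      ((∑ v ∈ A, wG v + ∑ v ∈ B, wH v : ℤ) : WithBot ℤ) ≤ M) :
    MaxW G colG wG s + MaxW H colH wH t ≤ M := by
  rcases MaxW_eq_bot_or_exists G colG wG s with hG | ⟨A, hA, hAs, hGA⟩
  · simp [hG]
  rcases MaxW_eq_bot_or_exists H colH wH t with hH | ⟨B, hB, hBt, hHB⟩
  · simp [hH]
  rw [hGA, hHB, ← WithBot.coe_add]
  exact h A B hA hB hAs hBt

section Join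

variable {k : ℕ} {α β : Type*} {G₁ : SimpleGraph α} {G₂ : SimpleGraph β} {c₁ : α → Fin k}
  {c₂ : β → Fin k} {S : Set (Fin k × Fin k)}

lemma joinGraph_indep_disjSum_iff {A : Finset α} {B : Finset β} :
    (∀ u ∈ A.disjSum B, ∀ v ∈ A.disjSum B, ¬ (joinGraph G₁ G₂ c₁ c₂ S).Adj u v) ↔
      (∀ u ∈ A, ∀ v ∈ A, ¬ G₁.Adj u v) ∧ (∀ u ∈ B, ∀ v ∈ B, ¬ G₂.Adj u v) ∧
        ¬ ∃ q ∈ S, q.1 ∈ A.image c₁ ∧ q.2 ∈ B.image c₂ := by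
  constructor
  · intro h
    refine ⟨fun u hu v hv => h (.inl u) (Finset.inl_mem_disjSum.mpr hu) (.inl v)
        (Finset.inl_mem_disjSum.mpr hv),
      fun u hu v hv => h (.inr u) (Finset.inr_mem_disjSum.mpr hu) (.inr v)
        (Finset.inr_mem_disjSum.mpr hv), ?_⟩
    rintro ⟨⟨i, j⟩, hS, hi, hj⟩
    obtain ⟨a, ha, rfl⟩ := Finset.mem_image.mp hi
    obtain ⟨b, hb, rfl⟩ := Finset.mem_image.mp hj
    exact h (.inl a) (Finset.inl_mem_disjSum.mpr ha) (.inr b) (Finset.inr_mem_disjSum.mpr hb) hS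
  · rintro ⟨hA, hB, hS⟩ (u | u) hu (v | v) hv hadj
    · exact hA u (Finset.inl_mem_disjSum.mp hu) v (Finset.inl_mem_disjSum.mp hv) hadj
    · exact hS ⟨_, hadj, Finset.mem_image_of_mem c₁ (Finset.inl_mem_disjSum.mp hu),
        Finset.mem_image_of_mem c₂ (Finset.inr_mem_disjSum.mp hv)⟩
    · exact hS ⟨_, hadj, Finset.mem_image_of_mem c₁ (Finset.inl_mem_disjSum.mp hv),
        Finset.mem_image_of_mem c₂ (Finset.inr_mem_disjSum.mp hu)⟩
    · exact hB u (Finset.inr_mem_disjSum.mp hu) v (Finset.inr_mem_disjSum.mp hv) hadj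

variable [Fintype α] [Fintype β] {w : α ⊕ β → ℤ} {s : Finset (Fin k)}

lemma le_joinMaxRHS {s₁ s₂ : Finset (Fin k)} (hs : s₁ ∪ s₂ = s)
    (hS : ¬ ∃ q ∈ S, q.1 ∈ s₁ ∧ q.2 ∈ s₂) :
    MaxW G₁ c₁ (fun a => w (Sum.inl a)) s₁ + MaxW G₂ c₂ (fun b => w (Sum.inr b)) s₂ ≤
      joinMaxRHS G₁ G₂ c₁ c₂ S w s := by
  classical
  unfold joinMaxRHS
  refine Finset.le_sup (b := (s₁, s₂)) (f := fun p : Finset (Fin k) × Finset (Fin k) =>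
      MaxW G₁ c₁ (fun a => w (Sum.inl a)) p.1 + MaxW G₂ c₂ (fun b => w (Sum.inr b)) p.2) ?_
  exact Finset.mem_filter.mpr ⟨Finset.mem_univ _, hs, hS⟩

lemma joinMaxRHS_le {M : WithBot ℤ}
    (h : ∀ s₁ s₂ : Finset (Fin k), s₁ ∪ s₂ = s → (¬ ∃ q ∈ S, q.1 ∈ s₁ ∧ q.2 ∈ s₂) →
      MaxW G₁ c₁ (fun a => w (Sum.inl a)) s₁ + MaxW G₂ c₂ (fun b => w (Sum.inr b)) s₂ ≤ M) :
    joinMaxRHS G₁ G₂ c₁ c₂ S w s ≤ M := by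
  classical
  refine Finset.sup_le ?_
  rintro ⟨s₁, s₂⟩ hs
  exact h s₁ s₂ (Finset.mem_filter.mp hs).2.1 (Finset.mem_filter.mp hs).2.2

end Join

/-- Dynamic programming rule for maximum-weight independent sets under the join
operation: for every color set `s`, the maximum weight of an independent set of
`G₁ ⋈_S G₂` with color set exactly `s` is the maximum, over pairs `(c₁, c₂)` of color
sets with `c₁ ∪ c₂ = s` and no pair `(p,q) ∈ S` with `p ∈ c₁`, `q ∈ c₂`, of the sum of
the corresponding maximum weights in `G₁` and `G₂` (with `⊥` as the maximum of an empty
collection, and `⊥ + m = ⊥`). -/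
theorem MaxW_joinGraph {k : ℕ} {α β : Type*} [Fintype α] [Fintype β]
    (G₁ : SimpleGraph α) (G₂ : SimpleGraph β) (c₁ : α → Fin k) (c₂ : β → Fin k)
    (S : Set (Fin k × Fin k)) (w : α ⊕ β → ℤ) (s : Finset (Fin k)) :
    MaxW (joinGraph G₁ G₂ c₁ c₂ S) (Sum.elim c₁ c₂) w s =
      joinMaxRHS G₁ G₂ c₁ c₂ S w s := by
  refine le_antisymm (MaxW_le fun X hX hXs => ?_) (joinMaxRHS_le fun s₁ s₂ hs hS => ?_)
  · rw [← Finset.toLeft_disjSum_toRight (u := X)] at hX hXs ⊢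
    obtain ⟨h₁, h₂, hS⟩ := joinGraph_indep_disjSum_iff.mp hX
    rw [Finset.image_disjSum_elim] at hXs
    calc ((∑ v ∈ X.toLeft.disjSum X.toRight, w v : ℤ) : WithBot ℤ)
        = ((∑ a ∈ X.toLeft, w (.inl a) : ℤ) : WithBot ℤ) + ((∑ b ∈ X.toRight, w (.inr b) : ℤ)) :=
          by rw [Finset.sum_disjSum, WithBot.coe_add]
      _ ≤ _ := add_le_add (le_MaxW h₁ rfl) (le_MaxW h₂ rfl)
      _ ≤ _ := le_joinMaxRHS hXs hS
  · refine MaxW_add_MaxW_le fun A B hA hB hAs hBt => ?_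
    rw [← Finset.sum_disjSum]
    refine le_MaxW (joinGraph_indep_disjSum_iff.mpr ⟨hA, hB, ?_⟩) ?_
    · rwa [hAs, hBt]
    · rw [Finset.image_disjSum_elim, hAs, hBt, hs]
end
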